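/- arXiv:1411.6175 — 8 statements merged into one kernel-verified Lean document; each statement's English description precedes it below -/
import Mathlib

section
/- Straight line segments are geodesics for the Hilbert metric: for any x, y in D and any point p on the segment [x,y], one has d_H(x,p) + d_H(p,y) = d_H(x,y). -/
set_option maxHeartbeats 1000000


/-- Straight line segments are geodesics for the Hilbert metric:
for any `x, y ∈ D` and any point `p` on the segment `[x,y]`,
`d_H(x,p) + d_H(p,y) = d_H(x,y)`.  The Hilbert metric `dH` is specified by its
defining property: `dH x x = 0` and, for `x ≠ y`,
`dH x y = log((‖x-z‖‖y-w‖)/(‖y-z‖‖x-w‖))` where `w, x, y, z` lie in this order on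
a line with `w, z ∈ ∂D`. -/
theorem hilbert_segments_geodesic {n : ℕ}
    (D : Set (EuclideanSpace ℝ (Fin n)))
    (hopen : IsOpen D) (hbdd : Bornology.IsBounded D) (hconv : Convex ℝ D)
    (dH : EuclideanSpace ℝ (Fin n) → EuclideanSpace ℝ (Fin n) → ℝ)
    (hdiag : ∀ x ∈ D, dH x x = 0)
    (hdef : ∀ x ∈ D, ∀ y ∈ D, x ≠ y →
      ∀ w ∈ frontier D, ∀ z ∈ frontier D,
        (∃ s : ℝ, s < 0 ∧ w = x + s • (y - x)) →
        (∃ t : ℝ, 1 < t ∧ z = x + t • (y - x)) →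
        dH x y = Real.log ((‖x - z‖ * ‖y - w‖) / (‖y - z‖ * ‖x - w‖))) :
    ∀ x ∈ D, ∀ y ∈ D, ∀ p ∈ segment ℝ x y,
      dH x p + dH p y = dH x y := by
  intro x hx y hy p hp
  have hpD : p ∈ D := hconv.segment_subset hx hy hp
  by_cases hxy : x = y
  · subst hxy
    rw [segment_same, Set.mem_singleton_iff] at hp
    rw [hp, hdiag x hx, zero_add]
  obtain ⟨c, u, hc, hu0, hcu, hp'⟩ := hp
  set v : EuclideanSpace ℝ (Fin n) := y - x with hv
  have hpx : p = x + u • v := by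
    have hc1 : c = 1 - u := by linarith
    rw [← hp', hc1, hv]; module
  have hvne : v ≠ 0 := sub_ne_zero.mpr (Ne.symm hxy)
  have hL : 0 < ‖v‖ := norm_pos_iff.mpr hvne
  by_cases h0 : u = 0
  · have hpx' : p = x := by rw [hpx, h0]; simp
    subst hpx'
    rw [hdiag p hx, zero_add]
  by_cases h1 : u = 1
  · have hpy' : p = y := by rw [hpx, h1, hv]; simp
    subst hpy'
    rw [hdiag p hy, add_zero]
  have hu0' : 0 < u := lt_of_le_of_ne hu0 (Ne.symm h0)
  have hu1' : u < 1 := lt_of_le_of_ne (by linarith) h1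
  -- the set of parameters t with x + t • v ∈ D
  set S : Set ℝ := {t : ℝ | x + t • v ∈ D} with hSdef
  have hφ : Continuous fun t : ℝ => x + t • v := by continuity
  have hSopen : IsOpen S := hφ.isOpen_preimage D hopen
  have hS0 : (0:ℝ) ∈ S := by simp [hSdef, hx]
  have hS1 : (1:ℝ) ∈ S := by
    have h : x + (1:ℝ) • v = y := by rw [hv]; module
    show x + (1:ℝ) • v ∈ D
    rw [h]; exact hy
  obtain ⟨r, hr⟩ := hbdd.subset_closedBall x
  have hbound : ∀ t ∈ S, |t| ≤ r / ‖v‖ := by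
    intro t ht
    have h2 := hr ht
    rw [Metric.mem_closedBall, dist_eq_norm] at h2
    have h3 : ‖t • v‖ ≤ r := by
      have : x + t • v - x = t • v := by module
      rwa [this] at h2
    rw [norm_smul, Real.norm_eq_abs] at h3
    rw [le_div_iff₀ hL]
    exact h3
  have hbdA : BddAbove S := ⟨r / ‖v‖, fun t ht => (le_abs_self t).trans (hbound t ht)⟩
  have hbdB : BddBelow S := ⟨-(r / ‖v‖), fun t ht => (abs_le.mp (hbound t ht)).1⟩
  set a := sInf S with hadef
  set b := sSup S with hbdef
  have hlub : IsLUB S b := isLUB_csSup ⟨0, hS0⟩ hbdA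
  have hglb : IsGLB S a := isGLB_csInf ⟨0, hS0⟩ hbdB
  have ha0 : a < 0 := by
    obtain ⟨ε, hε, hball⟩ := Metric.isOpen_iff.mp hSopen 0 hS0
    have hmem : -(ε/2) ∈ S := by
      apply hball
      rw [Metric.mem_ball, Real.dist_eq]
      rw [sub_zero, abs_neg, abs_of_pos (by linarith)]
      linarith
    have := hglb.1 hmem
    linarith
  have hb1 : 1 < b := by
    obtain ⟨ε, hε, hball⟩ := Metric.isOpen_iff.mp hSopen 1 hS1
    have hmem : 1 + ε/2 ∈ S := by
      apply hball
      rw [Metric.mem_ball, Real.dist_eq]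
      rw [show (1:ℝ) + ε/2 - 1 = ε/2 by ring, abs_of_pos (by linarith)]
      linarith
    have := hlub.1 hmem
    linarith
  set w : EuclideanSpace ℝ (Fin n) := x + a • v with hwdef
  set z : EuclideanSpace ℝ (Fin n) := x + b • v with hzdef
  -- frontier membership
  have hclosureS : closure S ⊆ (fun t : ℝ => x + t • v) ⁻¹' closure D :=
    hφ.closure_preimage_subset D
  have hwD : w ∈ frontier D := by
    rw [frontier, hopen.interior_eq, Set.mem_diff]
    constructor
    · exact hclosureS (hglb.mem_closure ⟨0, hS0⟩)
    · intro hwd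
      have haS : a ∈ S := hwd
      obtain ⟨ε, hε, hball⟩ := Metric.isOpen_iff.mp hSopen a haS
      have hmem : a - ε/2 ∈ S := by
        apply hball
        rw [Metric.mem_ball, Real.dist_eq]
        rw [show a - ε/2 - a = -(ε/2) by ring, abs_neg, abs_of_pos (by linarith)]
        linarith
      have := hglb.1 hmem
      linarith
  have hzD : z ∈ frontier D := by
    rw [frontier, hopen.interior_eq, Set.mem_diff]
    constructor
    · exact hclosureS (hlub.mem_closure ⟨0, hS0⟩)
    · intro hzd
      have hbS : b ∈ S := hzd
      obtain ⟨ε, hε, hball⟩ := Metric.isOpen_iff.mp hSopen b hbS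
      have hmem : b + ε/2 ∈ S := by
        apply hball
        rw [Metric.mem_ball, Real.dist_eq]
        rw [show b + ε/2 - b = ε/2 by ring, abs_of_pos (by linarith)]
        linarith
      have := hlub.1 hmem
      linarith
  -- basic difference computations
  have hpx0 : p - x = u • v := by rw [hpx]; module
  have hyp0 : y - p = (1-u) • v := by rw [hpx, hv]; module
  have hxp : x ≠ p := by
    intro h
    have huv : u • v = 0 := by rw [← hpx0, ← h]; simp
    rcases smul_eq_zero.mp huv with h' | h'
    · exact h0 h'
    · exact hvne h'
  have hpy : p ≠ y := by
    intro h
    have huv : (1-u) • v = 0 := by rw [← hyp0, h]; simp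
    rcases smul_eq_zero.mp huv with h' | h'
    · exact h1 (by linarith)
    · exact hvne h'
  have h1u : (0:ℝ) < 1 - u := by linarith
  -- apply the defining formula three times
  have e1 : dH x y = Real.log ((‖x - z‖ * ‖y - w‖) / (‖y - z‖ * ‖x - w‖)) := by
    apply hdef x hx y hy hxy w hwD z hzD
    · exact ⟨a, ha0, by rw [hwdef, hv]⟩
    · exact ⟨b, by linarith, by rw [hzdef, hv]⟩
  have e2 : dH x p = Real.log ((‖x - z‖ * ‖p - w‖) / (‖p - z‖ * ‖x - w‖)) := by
    apply hdef x hx p hpD hxp w hwD z hzD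
    · refine ⟨a/u, div_neg_of_neg_of_pos ha0 hu0', ?_⟩
      rw [hpx0, smul_smul, div_mul_cancel₀ a (ne_of_gt hu0'), hwdef]
    · refine ⟨b/u, (one_lt_div hu0').mpr (by linarith), ?_⟩
      rw [hpx0, smul_smul, div_mul_cancel₀ b (ne_of_gt hu0'), hzdef]
  have e3 : dH p y = Real.log ((‖p - z‖ * ‖y - w‖) / (‖y - z‖ * ‖p - w‖)) := by
    apply hdef p hpD y hy hpy w hwD z hzD
    · refine ⟨(a-u)/(1-u), div_neg_of_neg_of_pos (by linarith) h1u, ?_⟩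
      rw [hyp0, smul_smul, div_mul_cancel₀ (a-u) (ne_of_gt h1u), hwdef, hpx]
      module
    · refine ⟨(b-u)/(1-u), (one_lt_div h1u).mpr (by linarith), ?_⟩
      rw [hyp0, smul_smul, div_mul_cancel₀ (b-u) (ne_of_gt h1u), hzdef, hpx]
      module
  -- norm computations
  have hb0 : (0:ℝ) < b := by linarith
  have n_xz : ‖x - z‖ = b * ‖v‖ := by
    have hd : x - z = (-b) • v := by rw [hzdef]; module
    rw [hd, norm_smul, Real.norm_eq_abs, abs_neg, abs_of_pos hb0]
  have n_yw : ‖y - w‖ = (1 - a) * ‖v‖ := by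
    have hd : y - w = (1 - a) • v := by rw [hwdef, hv]; module
    rw [hd, norm_smul, Real.norm_eq_abs, abs_of_pos (by linarith)]
  have n_yz : ‖y - z‖ = (b - 1) * ‖v‖ := by
    have hd : y - z = (-(b-1)) • v := by rw [hzdef, hv]; module
    rw [hd, norm_smul, Real.norm_eq_abs, abs_neg, abs_of_pos (by linarith)]
  have n_xw : ‖x - w‖ = (-a) * ‖v‖ := by
    have hd : x - w = (-a) • v := by rw [hwdef]; module
    rw [hd, norm_smul, Real.norm_eq_abs, abs_of_pos (by linarith)]
  have n_pw : ‖p - w‖ = (u - a) * ‖v‖ := by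
    have hd : p - w = (u - a) • v := by rw [hwdef, hpx]; module
    rw [hd, norm_smul, Real.norm_eq_abs, abs_of_pos (by linarith)]
  have n_pz : ‖p - z‖ = (b - u) * ‖v‖ := by
    have hd : p - z = (-(b - u)) • v := by rw [hzdef, hpx]; module
    rw [hd, norm_smul, Real.norm_eq_abs, abs_neg, abs_of_pos (by linarith)]
  rw [e1, e2, e3, n_xz, n_yw, n_yz, n_xw, n_pw, n_pz]
  have hA : (0:ℝ) < (b * ‖v‖ * ((u - a) * ‖v‖)) / ((b - u) * ‖v‖ * ((-a) * ‖v‖)) :=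
    div_pos (mul_pos (mul_pos hb0 hL) (mul_pos (by linarith) hL))
      (mul_pos (mul_pos (by linarith) hL) (mul_pos (by linarith) hL))
  have hB : (0:ℝ) < ((b - u) * ‖v‖ * ((1 - a) * ‖v‖)) / ((b - 1) * ‖v‖ * ((u - a) * ‖v‖)) :=
    div_pos (mul_pos (mul_pos (by linarith) hL) (mul_pos (by linarith) hL))
      (mul_pos (mul_pos (by linarith) hL) (mul_pos (by linarith) hL))
  rw [← Real.log_mul hA.ne' hB.ne']
  congr 1
  have hD1 : ((b - u) * ‖v‖ * (-a * ‖v‖) * ((b - 1) * ‖v‖ * ((u - a) * ‖v‖))) ≠ 0 :=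
    ne_of_gt (mul_pos
      (mul_pos (mul_pos (by linarith) hL) (mul_pos (by linarith) hL))
      (mul_pos (mul_pos (by linarith) hL) (mul_pos (by linarith) hL)))
  have hD2 : ((b - 1) * ‖v‖ * (-a * ‖v‖)) ≠ 0 :=
    ne_of_gt (mul_pos (mul_pos (by linarith) hL) (mul_pos (by linarith) hL))
  rw [div_mul_div_comm, div_eq_div_iff hD1 hD2]
  ring
end

section
/- For a bounded open convex domain D ⊂ ℝ^n with associated cone C := {(λp, λ) : p ∈ D, λ > 0} ⊂ ℝ^{n+1}, the gauge M(x/y;C) := inf{λ > 0 : λy - x ∈ closure C} satisfies log M(x/y;C) = F(x,y) for all x, y in D (identified with the cross-section of C at height 1), where F is the Funk metric on D. -/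
variable {n : ℕ}

private lemma cone_snd_nonneg {D : Set (EuclideanSpace ℝ (Fin n))}
    {C : Set (EuclideanSpace ℝ (Fin n) × ℝ)}
    (hC : C = {q | ∃ p ∈ D, ∃ l : ℝ, 0 < l ∧ q = (l • p, l)})
    {q : EuclideanSpace ℝ (Fin n) × ℝ} (hq : q ∈ closure C) : 0 ≤ q.2 := by
  have hsub : C ⊆ {q : EuclideanSpace ℝ (Fin n) × ℝ | 0 ≤ q.2} := by
    subst hC
    rintro q ⟨p, hp, l, hl, rfl⟩
    exact hl.le
  have hcl : IsClosed {q : EuclideanSpace ℝ (Fin n) × ℝ | 0 ≤ q.2} :=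
    isClosed_le continuous_const continuous_snd
  exact closure_minimal hsub hcl hq

private lemma cone_fst_mem {D : Set (EuclideanSpace ℝ (Fin n))}
    {C : Set (EuclideanSpace ℝ (Fin n) × ℝ)}
    (hC : C = {q | ∃ p ∈ D, ∃ l : ℝ, 0 < l ∧ q = (l • p, l)})
    {q : EuclideanSpace ℝ (Fin n) × ℝ} (hq : q ∈ closure C) (h2 : 0 < q.2) :
    q.2⁻¹ • q.1 ∈ closure D := by
  obtain ⟨u, hu, hlim⟩ := mem_closure_iff_seq_limit.1 hq
  subst hC
  choose p hp l hl hEq using hu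
  have hl2 : Filter.Tendsto l Filter.atTop (nhds q.2) := by
    have := (continuous_snd.tendsto q).comp hlim
    simpa [Function.comp_def, hEq] using this
  have hl1 : Filter.Tendsto (fun k => (u k).1) Filter.atTop (nhds q.1) :=
    (continuous_fst.tendsto q).comp hlim
  have hpt : Filter.Tendsto (fun k => (l k)⁻¹ • (u k).1) Filter.atTop (nhds (q.2⁻¹ • q.1)) :=
    (hl2.inv₀ h2.ne').smul hl1
  have hpe : ∀ k, (l k)⁻¹ • (u k).1 = p k := by
    intro k
    rw [hEq k]
    simp [smul_smul, inv_mul_cancel₀ (hl k).ne']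
  refine mem_closure_of_tendsto hpt ?_
  filter_upwards with k
  rw [hpe k]; exact hp k

private lemma cone_fst_zero {D : Set (EuclideanSpace ℝ (Fin n))}
    (hbdd : Bornology.IsBounded D)
    {C : Set (EuclideanSpace ℝ (Fin n) × ℝ)}
    (hC : C = {q | ∃ p ∈ D, ∃ l : ℝ, 0 < l ∧ q = (l • p, l)})
    {q : EuclideanSpace ℝ (Fin n) × ℝ} (hq : q ∈ closure C) (h2 : q.2 = 0) :
    q.1 = 0 := by
  obtain ⟨R, hR⟩ := hbdd.exists_norm_le
  obtain ⟨u, hu, hlim⟩ := mem_closure_iff_seq_limit.1 hq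
  subst hC
  choose p hp l hl hEq using hu
  have hl2 : Filter.Tendsto l Filter.atTop (nhds 0) := by
    have := (continuous_snd.tendsto q).comp hlim
    rw [h2] at this
    simpa [Function.comp_def, hEq] using this
  have hl1 : Filter.Tendsto (fun k => (u k).1) Filter.atTop (nhds q.1) :=
    (continuous_fst.tendsto q).comp hlim
  have hbound : ∀ k, ‖(u k).1‖ ≤ l k * max R 0 := by
    intro k
    rw [hEq k]
    simp only [norm_smul, Real.norm_eq_abs, abs_of_pos (hl k)]
    have : ‖p k‖ ≤ max R 0 := le_trans (hR _ (hp k)) (le_max_left _ _)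
    exact mul_le_mul_of_nonneg_left this (hl k).le
  have hz : Filter.Tendsto (fun k => ‖(u k).1‖) Filter.atTop (nhds 0) := by
    refine squeeze_zero (fun k => norm_nonneg _) hbound ?_
    simpa using hl2.mul_const (max R 0)
  have := tendsto_nhds_unique (hl1.norm) hz
  simpa [norm_eq_zero] using this

private lemma smul_mem_closure_cone {D : Set (EuclideanSpace ℝ (Fin n))}
    {C : Set (EuclideanSpace ℝ (Fin n) × ℝ)}
    (hC : C = {q | ∃ p ∈ D, ∃ l : ℝ, 0 < l ∧ q = (l • p, l)})
    {p : EuclideanSpace ℝ (Fin n)} (hp : p ∈ closure D) {l : ℝ} (hl : 0 < l) :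
    ((l • p, l) : EuclideanSpace ℝ (Fin n) × ℝ) ∈ closure C := by
  have hcont : Continuous (fun p : EuclideanSpace ℝ (Fin n) => ((l • p, l) : EuclideanSpace ℝ (Fin n) × ℝ)) := by
    fun_prop
  have hmaps : Set.MapsTo (fun p : EuclideanSpace ℝ (Fin n) => ((l • p, l) : EuclideanSpace ℝ (Fin n) × ℝ)) D C := by
    intro p' hp'
    rw [hC]
    exact ⟨p', hp', l, hl, rfl⟩
  exact map_mem_closure (f := fun p => ((l • p, l) : EuclideanSpace ℝ (Fin n) × ℝ)) hcont hp hmaps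

private lemma zero_mem_closure_cone {D : Set (EuclideanSpace ℝ (Fin n))}
    {C : Set (EuclideanSpace ℝ (Fin n) × ℝ)}
    (hC : C = {q | ∃ p ∈ D, ∃ l : ℝ, 0 < l ∧ q = (l • p, l)})
    {x : EuclideanSpace ℝ (Fin n)} (hx : x ∈ D) :
    ((0, 0) : EuclideanSpace ℝ (Fin n) × ℝ) ∈ closure C := by
  have hlim : Filter.Tendsto (fun k : ℕ => ((((k : ℝ) + 1)⁻¹ • x, ((k : ℝ) + 1)⁻¹) : EuclideanSpace ℝ (Fin n) × ℝ))
      Filter.atTop (nhds (0, 0)) := by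
    have h1 : Filter.Tendsto (fun k : ℕ => ((k : ℝ) + 1)⁻¹) Filter.atTop (nhds 0) :=
      tendsto_one_div_add_atTop_nhds_zero_nat.congr (by intro k; rw [one_div])
    have h2 : Filter.Tendsto (fun k : ℕ => ((k : ℝ) + 1)⁻¹ • x) Filter.atTop
        (nhds ((0 : ℝ) • x)) := h1.smul_const x
    rw [zero_smul] at h2
    exact h2.prodMk_nhds h1
  refine mem_closure_of_tendsto hlim ?_
  filter_upwards with k
  rw [hC]
  exact ⟨x, hx, ((k : ℝ) + 1)⁻¹, by positivity, rfl⟩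

private lemma exit_point {n : ℕ} {D : Set (EuclideanSpace ℝ (Fin n))}
    (hopen : IsOpen D) (hbdd : Bornology.IsBounded D) (hconv : Convex ℝ D)
    {x y : EuclideanSpace ℝ (Fin n)} (hx : x ∈ D) (hy : y ∈ D) (hxy : x ≠ y) :
    ∃ t₀ : ℝ, 1 < t₀ ∧ (x + t₀ • (y - x)) ∈ closure D ∧ (x + t₀ • (y - x)) ∉ D ∧
      (∀ t, 0 ≤ t → t < t₀ → x + t • (y - x) ∈ D) ∧
      (∀ s, t₀ < s → x + s • (y - x) ∉ closure D) := by
  set g : ℝ → EuclideanSpace ℝ (Fin n) := fun t => x + t • (y - x) with hg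
  have hgc : Continuous g := by fun_prop
  set T : Set ℝ := g ⁻¹' D with hT
  have hTopen : IsOpen T := hopen.preimage hgc
  have h1T : (1 : ℝ) ∈ T := by
    simp only [hT, Set.mem_preimage, hg, one_smul]
    simpa using hy
  have hne : ‖y - x‖ ≠ 0 := by
    simpa [sub_eq_zero] using (Ne.symm hxy)
  have hnpos : 0 < ‖y - x‖ := lt_of_le_of_ne (norm_nonneg _) (Ne.symm hne)
  obtain ⟨R, hR⟩ := hbdd.exists_norm_le
  have hTbdd : BddAbove T := by
    refine ⟨(R + ‖x‖) / ‖y - x‖, fun t ht => ?_⟩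
    have h1 : ‖g t‖ ≤ R := hR _ ht
    have h2 : ‖t • (y - x)‖ ≤ ‖g t‖ + ‖x‖ := by
      have : t • (y - x) = g t - x := by simp [hg]
      rw [this]
      exact norm_sub_le_of_le (le_refl _) (le_refl _) |>.trans (by simp [norm_sub_le])
    have h3 : |t| * ‖y - x‖ ≤ R + ‖x‖ := by
      rw [← abs_of_nonneg (norm_nonneg (y - x)), ← abs_mul]
      calc |t * ‖y - x‖| = ‖t • (y - x)‖ := by rw [norm_smul]; simp [abs_mul, abs_of_nonneg (norm_nonneg _)]
        _ ≤ R + ‖x‖ := by linarith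
    rw [le_div_iff₀ hnpos]
    calc t * ‖y - x‖ ≤ |t| * ‖y - x‖ := by
          exact mul_le_mul_of_nonneg_right (le_abs_self t) (norm_nonneg _)
      _ ≤ R + ‖x‖ := h3
  set t₀ : ℝ := sSup T with ht₀
  have h1le : (1 : ℝ) ≤ t₀ := le_csSup hTbdd h1T
  have ht₀notT : t₀ ∉ T := by
    intro h
    obtain ⟨ε, hε, hball⟩ := Metric.isOpen_iff.1 hTopen t₀ h
    have : t₀ + ε / 2 ∈ T := hball (by simp [Real.dist_eq, abs_of_pos, hε])
    have := le_csSup hTbdd this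
    linarith
  have h1lt : 1 < t₀ := lt_of_le_of_ne h1le (fun h => ht₀notT (h ▸ h1T))
  have hbelow : ∀ t, 0 ≤ t → t < t₀ → g t ∈ D := by
    intro t ht0 htlt
    obtain ⟨s, hsT, hts⟩ := exists_lt_of_lt_csSup ⟨1, h1T⟩ htlt
    have hs0 : 0 < s := lt_of_le_of_lt ht0 hts
    have hcomb : g t = (1 - t / s) • x + (t / s) • g s := by
      have hts' : t / s * s = t := div_mul_cancel₀ t hs0.ne'
      simp only [hg]
      rw [smul_add, smul_smul, hts']
      module
    rw [hcomb]
    exact hconv hx hsT (by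
        have : t / s ≤ 1 := (div_le_one hs0).2 hts.le
        linarith)
      (by positivity) (by ring)
  have hmapsTo : Set.MapsTo g (Set.Ico 0 t₀) D := fun t ht => hbelow t ht.1 ht.2
  have hzcl : g t₀ ∈ closure D := by
    have ht0cl : t₀ ∈ closure (Set.Ico (0:ℝ) t₀) := by
      rw [closure_Ico (by linarith : (0:ℝ) ≠ t₀)]
      exact ⟨by linarith, le_refl _⟩
    exact map_mem_closure hgc ht0cl hmapsTo
  have hafter : ∀ s, t₀ < s → g s ∉ closure D := by
    intro s hs hmem
    have hs0 : 0 < s := by linarith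
    have hfrac0 : 0 < t₀ / s := by positivity
    have hfrac1 : t₀ / s < 1 := (div_lt_one hs0).2 hs
    have hcomb : g t₀ = (1 - t₀ / s) • x + (t₀ / s) • g s := by
      have hts' : t₀ / s * s = t₀ := div_mul_cancel₀ t₀ hs0.ne'
      simp only [hg]
      rw [smul_add, smul_smul, hts']
      module
    have hseg : g t₀ ∈ openSegment ℝ x (g s) :=
      ⟨1 - t₀ / s, t₀ / s, by linarith, hfrac0, by ring, hcomb.symm⟩
    have : g t₀ ∈ interior D := by
      refine hconv.openSegment_interior_closure_subset_interior ?_ hmem hseg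
      rw [hopen.interior_eq]; exact hx
    rw [hopen.interior_eq] at this
    exact ht₀notT this
  exact ⟨t₀, h1lt, hzcl, ht₀notT, hbelow, hafter⟩


/-- For a bounded open convex domain `D ⊂ ℝⁿ` with associated cone
`C := {(λp, λ) : p ∈ D, λ > 0} ⊂ ℝⁿ × ℝ`, the gauge
`M(x/y;C) := inf{λ > 0 : λ•y - x ∈ closure C}` satisfies
`log M(x/y;C) = F(x,y)` for all `x, y ∈ D` (identified with the cross-section of
`C` at height `1`), where `F` is the Funk metric on `D` (specified by its
defining property). -/
theorem log_gauge_eq_funk {n : ℕ}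
    (D : Set (EuclideanSpace ℝ (Fin n)))
    (hopen : IsOpen D) (hbdd : Bornology.IsBounded D) (hconv : Convex ℝ D)
    (F : EuclideanSpace ℝ (Fin n) → EuclideanSpace ℝ (Fin n) → ℝ)
    (hFdiag : ∀ x ∈ D, F x x = 0)
    (hFdef : ∀ x ∈ D, ∀ y ∈ D, x ≠ y →
      ∀ z ∈ frontier D, (∃ t : ℝ, 1 < t ∧ z = x + t • (y - x)) →
        F x y = Real.log (‖x - z‖ / ‖y - z‖))
    (C : Set (EuclideanSpace ℝ (Fin n) × ℝ))
    (hC : C = {q | ∃ p ∈ D, ∃ l : ℝ, 0 < l ∧ q = (l • p, l)})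
    (M : (EuclideanSpace ℝ (Fin n) × ℝ) → (EuclideanSpace ℝ (Fin n) × ℝ) → ℝ)
    (hM : ∀ u v, M u v = sInf {l : ℝ | 0 < l ∧ l • v - u ∈ closure C}) :
    ∀ x ∈ D, ∀ y ∈ D, Real.log (M (x, 1) (y, 1)) = F x y := by
  intro x hx y hy
  rw [hM]
  have hpair : ∀ l : ℝ, l • ((y, 1) : EuclideanSpace ℝ (Fin n) × ℝ) - (x, 1)
      = ((l • y - x, l - 1) : EuclideanSpace ℝ (Fin n) × ℝ) := by
    intro l
    simp [Prod.ext_iff]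
  have hbdd' : BddBelow {l : ℝ | 0 < l ∧ l • ((y, 1) : EuclideanSpace ℝ (Fin n) × ℝ) - (x, 1) ∈ closure C} :=
    ⟨0, fun l hl => hl.1.le⟩
  by_cases hxy : x = y
  · subst hxy
    have hset : sInf {l : ℝ | 0 < l ∧ l • ((x, 1) : EuclideanSpace ℝ (Fin n) × ℝ) - (x, 1) ∈ closure C} = 1 := by
      have h1mem : (1 : ℝ) ∈ {l : ℝ | 0 < l ∧ l • ((x, 1) : EuclideanSpace ℝ (Fin n) × ℝ) - (x, 1) ∈ closure C} := by
        refine ⟨one_pos, ?_⟩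
        rw [hpair]
        simpa using zero_mem_closure_cone hC hx
      refine le_antisymm (csInf_le hbdd' h1mem) (le_csInf ⟨1, h1mem⟩ ?_)
      rintro l ⟨hl, hmem⟩
      rw [hpair] at hmem
      have := cone_snd_nonneg hC hmem
      simp only at this
      linarith
    rw [hset, Real.log_one, hFdiag x hx]
  · obtain ⟨t₀, ht₀, hzcl, hznD, hbelow, hafter⟩ := exit_point hopen hbdd hconv hx hy hxy
    set z : EuclideanSpace ℝ (Fin n) := x + t₀ • (y - x) with hz
    have hzfr : z ∈ frontier D := by
      rw [frontier, hopen.interior_eq]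
      exact ⟨hzcl, hznD⟩
    have hF : F x y = Real.log (‖x - z‖ / ‖y - z‖) :=
      hFdef x hx y hy hxy z hzfr ⟨t₀, ht₀, rfl⟩
    have ht₀1 : (0:ℝ) < t₀ - 1 := by linarith
    have hl₀pos : 0 < t₀ / (t₀ - 1) := by positivity
    -- the infimum equals t₀ / (t₀ - 1)
    have hset : sInf {l : ℝ | 0 < l ∧ l • ((y, 1) : EuclideanSpace ℝ (Fin n) × ℝ) - (x, 1) ∈ closure C}
        = t₀ / (t₀ - 1) := by
      have hmem : t₀ / (t₀ - 1) ∈ {l : ℝ | 0 < l ∧ l • ((y, 1) : EuclideanSpace ℝ (Fin n) × ℝ) - (x, 1) ∈ closure C} := by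
        refine ⟨hl₀pos, ?_⟩
        rw [hpair]
        have heq : ((t₀ / (t₀ - 1)) • y - x, t₀ / (t₀ - 1) - 1)
            = (((t₀ / (t₀ - 1) - 1) • z, t₀ / (t₀ - 1) - 1) : EuclideanSpace ℝ (Fin n) × ℝ) := by
          refine Prod.ext ?_ rfl
          show (t₀ / (t₀ - 1)) • y - x = (t₀ / (t₀ - 1) - 1) • (x + t₀ • (y - x))
          match_scalars <;> (field_simp; try ring)
        rw [heq]
        exact smul_mem_closure_cone hC hzcl (by rw [sub_pos, lt_div_iff₀ ht₀1]; linarith)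
      refine le_antisymm (csInf_le hbdd' hmem) (le_csInf ⟨_, hmem⟩ ?_)
      rintro l ⟨hl, hmeml⟩
      rw [hpair] at hmeml
      have hl1 : (0:ℝ) ≤ l - 1 := cone_snd_nonneg hC hmeml
      have hlne : l ≠ 1 := by
        intro h
        subst h
        have := cone_fst_zero hbdd hC hmeml (by norm_num)
        simp only [one_smul, sub_eq_zero] at this
        exact hxy this.symm
      have hl1' : (0:ℝ) < l - 1 := lt_of_le_of_ne hl1 (fun h => hlne (by linarith))
      have hmemD : (l - 1)⁻¹ • (l • y - x) ∈ closure D := cone_fst_mem hC hmeml hl1'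
      have heq2 : (l - 1)⁻¹ • (l • y - x) = x + (l / (l - 1)) • (y - x) := by
        match_scalars <;> (field_simp; try ring)
      rw [heq2] at hmemD
      have hsle : l / (l - 1) ≤ t₀ := by
        by_contra h
        push_neg at h
        exact hafter _ h hmemD
      have hll : l ≤ t₀ * (l - 1) := (div_le_iff₀ hl1').1 hsle
      rw [div_le_iff₀ ht₀1]
      nlinarith
    rw [hset, hF]
    congr 1
    have hxz : ‖x - z‖ = t₀ * ‖y - x‖ := by
      have : x - z = (-t₀) • (y - x) := by rw [hz]; module
      rw [this, norm_smul]
      simp [abs_of_pos (by linarith : (0:ℝ) < t₀)]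
    have hyz : ‖y - z‖ = (t₀ - 1) * ‖y - x‖ := by
      have : y - z = (1 - t₀) • (y - x) := by rw [hz]; module
      rw [this, norm_smul]
      rw [Real.norm_eq_abs, abs_of_neg (by linarith : 1 - t₀ < 0)]
      ring
    rw [hxz, hyz]
    have hne : ‖y - x‖ ≠ 0 := by
      simp [sub_eq_zero]
      exact fun h => hxy h.symm
    field_simp
end

section
/- For any point x ∈ X and any horofunction ξ, for all sufficiently small ε ≥ 0 there exists y ∈ X with ξ(x) − ξ(y) = d(x,y) = ε. -/
open Filter Topology

set_option maxHeartbeats 1000000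

noncomputable section

variable {X : Type*}

/-- The family of bounded sets of a metric space. -/
def bddSets (X : Type*) [PseudoMetricSpace X] : Set (Set X) :=
  {s : Set X | Bornology.IsBounded s}

/-- The embedding `z ↦ d(·,z) - d(b,z)` of `X` into the space of real functions
on `X` with the topology of uniform convergence on the sets in `𝔖`. -/
def psiMap (𝔖 : Set (Set X)) (d : X → X → ℝ) (b : X) (z : X) :
    UniformOnFun X ℝ 𝔖 :=
  UniformOnFun.ofFun 𝔖 (fun x => d x z - d b z)

/-- A horofunction. -/
def IsHorofunction (𝔖 : Set (Set X)) (d : X → X → ℝ) (b : X)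
    (ξ : UniformOnFun X ℝ 𝔖) : Prop :=
  ξ ∈ closure (Set.range (psiMap 𝔖 d b)) ∧ ξ ∉ Set.range (psiMap 𝔖 d b)

/-- For any point `x ∈ X` and any horofunction `ξ`, for all
sufficiently small `ε ≥ 0` there exists `y ∈ X` with
`ξ(x) − ξ(y) = d(x,y) = ε`. -/
theorem exists_small_downhill
    [MetricSpace X] [ProperSpace X] (d : X → X → ℝ) (b : X)
    (hd_nonneg : ∀ x y, 0 ≤ d x y)
    (hd_diag : ∀ x, d x x = 0)
    (hd_tri : ∀ x y z, d x z ≤ d x y + d y z)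
    (hd_sym : ∀ x y, dist x y = d x y + d y x)
    (hd_conv : ∀ (x : X) (u : ℕ → X),
      Tendsto (fun n => d (u n) x) atTop (𝓝 0) ↔
      Tendsto (fun n => d x (u n)) atTop (𝓝 0))
    (hgeo : ∀ x y : X, ∃ γ : ℝ → X, γ 0 = x ∧ γ (d x y) = y ∧
      ∀ s t : ℝ, 0 ≤ s → s ≤ t → t ≤ d x y → d (γ s) (γ t) = t - s)
    (x : X) (ξ : UniformOnFun X ℝ (bddSets X))
    (hξ : IsHorofunction (bddSets X) d b ξ) :
    ∃ ε₀ > (0 : ℝ), ∀ ε : ℝ, 0 ≤ ε → ε ≤ ε₀ →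
      ∃ y : X, UniformOnFun.toFun (bddSets X) ξ x
          - UniformOnFun.toFun (bddSets X) ξ y = d x y ∧ d x y = ε := by
  classical
  obtain ⟨hcl, hnr⟩ := hξ
  -- Lipschitz-type estimates
  have hlip : ∀ p z z' : X, |d p z - d p z'| ≤ dist z z' := by
    intro p z z'
    have h1 := hd_tri p z' z
    have h2 := hd_tri p z z'
    have h3 := hd_sym z z'
    have h4 := hd_nonneg z z'
    have h5 := hd_nonneg z' z
    rw [abs_le]; constructor <;> linarith
  have hlip2 : ∀ (z p p' : X), |d p z - d p' z| ≤ dist p p' := by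
    intro z p p'
    have h1 := hd_tri p p' z
    have h2 := hd_tri p' p z
    have h3 := hd_sym p p'
    have h4 := hd_nonneg p p'
    have h5 := hd_nonneg p' p
    rw [abs_le]; constructor <;> linarith
  -- Step 1: choose ε₀ such that d x y ≤ ε₀ implies d y x ≤ 1
  obtain ⟨ε₀, hε₀pos, hε₀⟩ : ∃ ε₀ > (0 : ℝ), ∀ y, d x y ≤ ε₀ → d y x ≤ 1 := by
    by_contra h
    push_neg at h
    choose u hu1 hu2 using fun n : ℕ => h (1 / (n + 1)) (by positivity)
    have h0 : Tendsto (fun n => d x (u n)) atTop (𝓝 0) :=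
      squeeze_zero (fun n => hd_nonneg x (u n)) hu1
        tendsto_one_div_add_atTop_nhds_zero_nat
    have h1 := (hd_conv x u).2 h0
    have h2 := h1.eventually (gt_mem_nhds (by norm_num : (0 : ℝ) < 1))
    obtain ⟨n, hn⟩ := h2.exists
    exact absurd hn (not_lt.2 (hu2 n).le)
  -- Step 2: approximating sequence from the closure
  have hzex : ∀ n : ℕ, ∃ z : X, ∀ p ∈ Metric.closedBall x (n : ℝ),
      dist (UniformOnFun.toFun (bddSets X) ξ p) (d p z - d b z) < 1 / (n + 1) := by
    intro n
    have hS : Metric.closedBall x (n : ℝ) ∈ bddSets X :=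
      Metric.isBounded_closedBall
    have hV : {q : ℝ × ℝ | dist q.1 q.2 < 1 / (n + 1)} ∈ uniformity ℝ :=
      Metric.dist_mem_uniformity (by positivity)
    have hnb := UniformOnFun.gen_mem_nhds _ _ ξ hS hV
    obtain ⟨g, hg1, hg2⟩ := mem_closure_iff_nhds.1 hcl _ hnb
    obtain ⟨z, rfl⟩ := hg2
    exact ⟨z, fun p hp => hg1 p hp⟩
  choose z hzs using hzex
  -- pointwise convergence of the approximants
  have hpt : ∀ p : X, Tendsto (fun n => d p (z n) - d b (z n)) atTop
      (𝓝 (UniformOnFun.toFun (bddSets X) ξ p)) := by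
    intro p
    rw [tendsto_iff_dist_tendsto_zero]
    refine squeeze_zero' (Eventually.of_forall fun n => dist_nonneg) ?_
      tendsto_one_div_add_atTop_nhds_zero_nat
    filter_upwards [eventually_ge_atTop ⌈dist x p⌉₊] with n hn
    have hp : p ∈ Metric.closedBall x (n : ℝ) := by
      rw [Metric.mem_closedBall, dist_comm]
      exact le_trans (Nat.le_ceil _) (by exact_mod_cast hn)
    rw [dist_comm]
    exact (hzs n p hp).le
  -- convergence of a subsequence of `z` contradicts ξ not in the range
  have hkey : ∀ (z' : X) (φ : ℕ → ℕ), Tendsto φ atTop atTop →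
      Tendsto (fun k => z (φ k)) atTop (𝓝 z') → False := by
    intro z' φ hφ hconv
    apply hnr
    refine ⟨z', ?_⟩
    have hdz : Tendsto (fun k => dist (z (φ k)) z') atTop (𝓝 0) :=
      tendsto_iff_dist_tendsto_zero.1 hconv
    have hgen : ∀ q : X, Tendsto (fun k => d q (z (φ k))) atTop (𝓝 (d q z')) := by
      intro q
      rw [tendsto_iff_dist_tendsto_zero]
      exact squeeze_zero (fun k => dist_nonneg)
        (fun k => by rw [Real.dist_eq]; exact hlip q _ _) hdz
    have hfun : UniformOnFun.toFun (bddSets X) ξ = fun p => d p z' - d b z' := by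
      funext p
      have h1 : Tendsto (fun k => d p (z (φ k)) - d b (z (φ k))) atTop
          (𝓝 (UniformOnFun.toFun (bddSets X) ξ p)) := (hpt p).comp hφ
      exact tendsto_nhds_unique h1 ((hgen p).sub (hgen b))
    calc psiMap (bddSets X) d b z'
        = UniformOnFun.ofFun (bddSets X) (UniformOnFun.toFun (bddSets X) ξ) := by
          rw [hfun]; rfl
      _ = ξ := UniformOnFun.ofFun_toFun ξ
  -- Step 3: eventually d x (z n) > ε₀
  have hesc : ∀ᶠ n in atTop, ε₀ < d x (z n) := by
    by_contra h
    rw [not_eventually] at h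
    have h' : ∃ᶠ n in atTop, d x (z n) ≤ ε₀ := h.mono fun n hn => not_lt.1 hn
    obtain ⟨φ, hφmono, hφle⟩ := extraction_of_frequently_atTop h'
    have hmem : ∀ k, z (φ k) ∈ Metric.closedBall x (ε₀ + 1) := by
      intro k
      rw [Metric.mem_closedBall, dist_comm, hd_sym]
      have h2 := hε₀ (z (φ k)) (hφle k)
      linarith [hφle k]
    obtain ⟨z', _, ψ, hψ, hconv⟩ :=
      (isCompact_closedBall x (ε₀ + 1)).tendsto_subseq hmem
    exact hkey z' (φ ∘ ψ) (hφmono.comp hψ).tendsto_atTop hconv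
  obtain ⟨N, hN⟩ := eventually_atTop.1 hesc
  -- Step 4: main construction
  refine ⟨ε₀, hε₀pos, fun ε hε0 hεε₀ => ?_⟩
  choose γ hγ0 hγT hγp using fun n : ℕ => hgeo x (z n)
  set m : ℕ → ℕ := fun k => k + N with hm
  have hmN : ∀ k, N ≤ m k := fun k => Nat.le_add_left N k
  have hεle : ∀ k, ε ≤ d x (z (m k)) :=
    fun k => le_of_lt (lt_of_le_of_lt hεε₀ (hN _ (hmN k)))
  set w : ℕ → X := fun k => γ (m k) ε with hw
  have hdx : ∀ k, d x (w k) = ε := by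
    intro k
    have h := hγp (m k) 0 ε le_rfl hε0 (hεle k)
    rw [hγ0 (m k)] at h
    simpa using h
  have hdw : ∀ k, d (w k) (z (m k)) = d x (z (m k)) - ε := by
    intro k
    have h := hγp (m k) ε (d x (z (m k))) hε0 (hεle k) le_rfl
    rw [hγT (m k)] at h
    exact h
  have hmemw : ∀ k, w k ∈ Metric.closedBall x (ε₀ + 1) := by
    intro k
    rw [Metric.mem_closedBall, dist_comm, hd_sym]
    have h1 : d x (w k) ≤ ε₀ := by rw [hdx k]; exact hεε₀
    have h2 := hε₀ _ h1
    linarith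
  obtain ⟨y, _, ψ, hψ, hconv⟩ :=
    (isCompact_closedBall x (ε₀ + 1)).tendsto_subseq hmemw
  have hdistconv : Tendsto (fun k => dist (w (ψ k)) y) atTop (𝓝 0) :=
    tendsto_iff_dist_tendsto_zero.1 hconv
  -- d x y = ε
  have hdxy : d x y = ε := by
    have h1 : Tendsto (fun k => d x (w (ψ k))) atTop (𝓝 (d x y)) := by
      rw [tendsto_iff_dist_tendsto_zero]
      exact squeeze_zero (fun k => dist_nonneg)
        (fun k => by rw [Real.dist_eq]; exact hlip x _ _) hdistconv
    have h2 : Tendsto (fun k => d x (w (ψ k))) atTop (𝓝 ε) := by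
      have : (fun k => d x (w (ψ k))) = fun _ => ε := funext fun k => hdx (ψ k)
      rw [this]; exact tendsto_const_nhds
    exact tendsto_nhds_unique h1 h2
  refine ⟨y, ?_, hdxy⟩
  rw [hdxy]
  -- ξ x - ξ y = ε
  have hmtend : Tendsto (fun k => m (ψ k)) atTop atTop :=
    tendsto_atTop_mono (fun k => le_trans hψ.le_apply (Nat.le_add_right _ _)) tendsto_id
  have hax : Tendsto (fun k => d x (z (m (ψ k))) - d b (z (m (ψ k)))) atTop
      (𝓝 (UniformOnFun.toFun (bddSets X) ξ x)) := (hpt x).comp hmtend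
  have hay : Tendsto (fun k => d y (z (m (ψ k))) - d b (z (m (ψ k)))) atTop
      (𝓝 (UniformOnFun.toFun (bddSets X) ξ y)) := (hpt y).comp hmtend
  have hby : Tendsto (fun k => d (w (ψ k)) (z (m (ψ k))) - d b (z (m (ψ k)))) atTop
      (𝓝 (UniformOnFun.toFun (bddSets X) ξ y)) := by
    refine hay.congr_dist ?_
    refine squeeze_zero (fun k => dist_nonneg) (fun k => ?_) hdistconv
    have h := hlip2 (z (m (ψ k))) (w (ψ k)) y
    rw [Real.dist_eq]
    calc |(d y (z (m (ψ k))) - d b (z (m (ψ k)))) -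
          (d (w (ψ k)) (z (m (ψ k))) - d b (z (m (ψ k))))|
        = |d y (z (m (ψ k))) - d (w (ψ k)) (z (m (ψ k)))| := by ring_nf
      _ ≤ dist y (w (ψ k)) := hlip2 _ _ _
      _ = dist (w (ψ k)) y := dist_comm _ _
  have hdiff : Tendsto (fun k => (d x (z (m (ψ k))) - d b (z (m (ψ k)))) -
      (d (w (ψ k)) (z (m (ψ k))) - d b (z (m (ψ k))))) atTop
      (𝓝 (UniformOnFun.toFun (bddSets X) ξ x - UniformOnFun.toFun (bddSets X) ξ y)) :=
    hax.sub hby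
  have hconst : (fun k => (d x (z (m (ψ k))) - d b (z (m (ψ k)))) -
      (d (w (ψ k)) (z (m (ψ k))) - d b (z (m (ψ k))))) = fun _ => ε := by
    funext k
    have h := hdw (ψ k)
    linarith
  rw [hconst] at hdiff
  exact tendsto_nhds_unique hdiff tendsto_const_nhds

end
end

section
/- For any horofunction ξ, the sublevel-set map α ↦ {x ∈ X : ξ(x) ≤ α} is continuous in the Painlevé–Kuratowski topology on closed subsets of X. -/
open Filter Topology
open Uniformity

noncomputable section

variable {X : Type*}

/-- Painlevé–Kuratowski convergence of a sequence of sets `C n` to a set `L`: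
(1) every point of `L` is a limit of points `x n ∈ C n` (for `n` large enough),
and (2) whenever points `x k ∈ C (φ k)` taken along a subsequence converge, the
limit lies in `L`. -/
def PKConverges {X : Type*} [TopologicalSpace X] (C : ℕ → Set X) (L : Set X) : Prop :=
  (∀ x ∈ L, ∃ u : ℕ → X, (∀ᶠ n in atTop, u n ∈ C n) ∧ Tendsto u atTop (𝓝 x)) ∧
  (∀ (φ : ℕ → ℕ), StrictMono φ → ∀ u : ℕ → X, (∀ k, u k ∈ C (φ k)) →
    ∀ x : X, Tendsto u atTop (𝓝 x) → x ∈ L)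

/-- Extraction of approximants from closure membership. -/
lemma psi_approx [MetricSpace X] (d : X → X → ℝ) (b : X)
    (ξ : UniformOnFun X ℝ (bddSets X))
    (hc : ξ ∈ closure (Set.range (psiMap (bddSets X) d b)))
    (S : Set X) (hS : S ∈ bddSets X) (δ : ℝ) (hδ : 0 < δ) :
    ∃ z : X, ∀ w ∈ S, |UniformOnFun.toFun (bddSets X) ξ w - (d w z - d b z)| < δ := by
  have hV : {p : ℝ × ℝ | dist p.1 p.2 < δ} ∈ 𝓤 ℝ := Metric.dist_mem_uniformity hδ
  have hnb := UniformOnFun.gen_mem_nhds ℝ (bddSets X) ξ hS hV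
  obtain ⟨f, hf1, z, rfl⟩ := mem_closure_iff_nhds.mp hc _ hnb
  refine ⟨z, fun w hw => ?_⟩
  have := hf1 w hw
  simpa [psiMap, Real.dist_eq] using this

/-- For any horofunction `ξ`, the sublevel-set map
`α ↦ {x ∈ X : ξ(x) ≤ α}` is continuous in the Painlevé–Kuratowski topology on
closed subsets of `X`: whenever `α_n → α`, the sublevel sets at heights `α_n`
converge in the Painlevé–Kuratowski sense to the sublevel set at height `α`. -/
theorem horofunction_sublevels_PK_continuous
    [MetricSpace X] [ProperSpace X] (d : X → X → ℝ) (b : X)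
    (hd_nonneg : ∀ x y, 0 ≤ d x y)
    (hd_diag : ∀ x, d x x = 0)
    (hd_tri : ∀ x y z, d x z ≤ d x y + d y z)
    (hd_sym : ∀ x y, dist x y = d x y + d y x)
    (hd_conv : ∀ (x : X) (u : ℕ → X),
      Tendsto (fun n => d (u n) x) atTop (𝓝 0) ↔
      Tendsto (fun n => d x (u n)) atTop (𝓝 0))
    (hgeo : ∀ x y : X, ∃ γ : ℝ → X, γ 0 = x ∧ γ (d x y) = y ∧
      ∀ s t : ℝ, 0 ≤ s → s ≤ t → t ≤ d x y → d (γ s) (γ t) = t - s)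
    (ξ : UniformOnFun X ℝ (bddSets X))
    (hξ : IsHorofunction (bddSets X) d b ξ)
    (α : ℝ) (a : ℕ → ℝ) (ha : Tendsto a atTop (𝓝 α)) :
    PKConverges (fun n => {x : X | UniformOnFun.toFun (bddSets X) ξ x ≤ a n})
      {x : X | UniformOnFun.toFun (bddSets X) ξ x ≤ α} := by
  set Ξ : X → ℝ := UniformOnFun.toFun (bddSets X) ξ with hΞ
  have approx := psi_approx d b ξ hξ.1
  -- d-Lipschitz property of Ξ
  have dlip : ∀ u v : X, Ξ u - Ξ v ≤ d u v := by
    intro u v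
    have hb2 : ({u, v} : Set X) ∈ bddSets X := (Set.toFinite ({u, v} : Set X)).isBounded
    refine le_of_forall_pos_le_add fun ε hε => ?_
    obtain ⟨z, hz⟩ := approx _ hb2 (ε / 2) (by positivity)
    have h1 := hz u (by simp)
    have h2 := hz v (by simp)
    have h3 := hd_tri u v z
    rw [abs_lt] at h1 h2
    linarith [h1.1, h1.2, h2.1, h2.2]
  have distlip : ∀ u v : X, |Ξ u - Ξ v| ≤ dist u v := by
    intro u v
    rw [abs_sub_le_iff]
    constructor
    · calc Ξ u - Ξ v ≤ d u v := dlip u v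
        _ ≤ dist u v := by rw [hd_sym]; linarith [hd_nonneg v u]
    · calc Ξ v - Ξ u ≤ d v u := dlip v u
        _ ≤ dist u v := by rw [hd_sym]; linarith [hd_nonneg u v]
  constructor
  · -- Part (1)
    intro x hx
    simp only [Set.mem_setOf_eq] at hx
    -- Step A : a forward radius δ₀ within which points stay in the ball of radius 2
    have stepA : ∃ δ₀ : ℝ, 0 < δ₀ ∧ ∀ y : X, d x y ≤ δ₀ → dist x y ≤ 2 := by
      by_contra hA
      push_neg at hA
      have hsel : ∀ k : ℕ, ∃ y : X, d x y ≤ min 1 (1 / ((k : ℝ) + 1)) ∧ 2 < dist x y := by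
        intro k
        obtain ⟨y, hy1, hy2⟩ := hA (min 1 (1 / ((k : ℝ) + 1))) (by positivity)
        exact ⟨y, hy1, hy2⟩
      choose y hy1 hy2 using hsel
      have h0 : Tendsto (fun k => d x (y k)) atTop (𝓝 0) := by
        refine squeeze_zero (fun k => hd_nonneg _ _) (fun k => (hy1 k).trans (min_le_right _ _)) ?_
        exact tendsto_one_div_add_atTop_nhds_zero_nat
      have h0' : Tendsto (fun k => d (y k) x) atTop (𝓝 0) := (hd_conv x y).mpr h0
      have hdist : Tendsto (fun k => dist x (y k)) atTop (𝓝 0) := by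
        have := h0.add h0'
        rw [add_zero] at this
        simpa only [← hd_sym] using this
      have : ∀ᶠ k in atTop, dist x (y k) < 2 := hdist.eventually (gt_mem_nhds (by norm_num))
      obtain ⟨k, hk⟩ := this.exists
      exact absurd (hy2 k) (not_lt.mpr hk.le)
    obtain ⟨δ₀, hδ₀pos, hδ₀⟩ := stepA
    -- Step B : approximants that are forward-far from x
    have far : ∀ δ : ℝ, 0 < δ → ∃ z : X, δ₀ ≤ d x z ∧
        ∀ w ∈ Metric.closedBall x 2, |Ξ w - (d w z - d b z)| < δ := by
      by_contra hB
      push_neg at hB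
      obtain ⟨δs, hδs, hbad⟩ := hB
      have hsel : ∀ k : ℕ, ∃ z : X,
          ∀ w ∈ Metric.closedBall x (2 + k), |Ξ w - (d w z - d b z)| < min δs (1 / (k + 1)) := by
        intro k
        exact approx _ (Metric.isBounded_closedBall) _ (lt_min hδs (by positivity))
      choose z hz using hsel
      have hzb : ∀ k, z k ∈ Metric.closedBall x 2 := by
        intro k
        have hsub : Metric.closedBall x 2 ⊆ Metric.closedBall x (2 + k) :=
          Metric.closedBall_subset_closedBall (le_add_of_nonneg_right (Nat.cast_nonneg k))
        have hgood : ∀ w ∈ Metric.closedBall x 2, |Ξ w - (d w (z k) - d b (z k))| < δs :=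
          fun w hw => lt_of_lt_of_le (hz k w (hsub hw)) (min_le_left _ _)
        have hnear : d x (z k) < δ₀ := by
          by_contra hge
          obtain ⟨w, hw, hwge⟩ := hbad (z k) (not_lt.mp hge)
          exact absurd (hgood w hw) (not_lt.mpr hwge)
        have := hδ₀ (z k) hnear.le
        simpa [Metric.mem_closedBall, dist_comm] using this
      obtain ⟨zs, hzsmem, φ, hφ, hφt⟩ := (isCompact_closedBall x 2).tendsto_subseq hzb
      apply hξ.2
      refine ⟨zs, ?_⟩
      have hdz : ∀ w : X, Tendsto (fun j => d w (z (φ j))) atTop (𝓝 (d w zs)) := by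
        intro w
        rw [tendsto_iff_dist_tendsto_zero]
        have hd2 : ∀ j, dist (d w (z (φ j))) (d w zs) ≤ dist (z (φ j)) zs := by
          intro j
          have t1 := hd_tri w zs (z (φ j))
          have t2 := hd_tri w (z (φ j)) zs
          have t3 := hd_sym (z (φ j)) zs
          have t4 := hd_nonneg (z (φ j)) zs
          have t5 := hd_nonneg zs (z (φ j))
          have t6 := dist_comm (z (φ j)) zs
          rw [Real.dist_eq, abs_sub_le_iff]
          constructor
          · nlinarith [t1, t3, t4, t6]
          · nlinarith [t2, t3, t5]
        have hzt : Tendsto (fun j => dist (z (φ j)) zs) atTop (𝓝 0) := by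
          have := tendsto_iff_dist_tendsto_zero.mp hφt
          simpa [Function.comp] using this
        exact squeeze_zero (fun j => dist_nonneg) hd2 hzt
      have hpt : ∀ w : X, Ξ w = d w zs - d b zs := by
        intro w
        have hlim : Tendsto (fun j => d w (z (φ j)) - d b (z (φ j))) atTop
            (𝓝 (d w zs - d b zs)) := (hdz w).sub (hdz b)
        have hlim2 : Tendsto (fun j => d w (z (φ j)) - d b (z (φ j))) atTop (𝓝 (Ξ w)) := by
          rw [tendsto_iff_dist_tendsto_zero]
          have hbound : ∀ᶠ j in atTop,
              dist (d w (z (φ j)) - d b (z (φ j))) (Ξ w) ≤ 1 / (j + 1) := by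
            filter_upwards [eventually_ge_atTop (Nat.ceil (dist w x))] with j hj
            have hwball : w ∈ Metric.closedBall x (2 + φ j) := by
              have h1 : dist w x ≤ (j : ℝ) := le_trans (Nat.le_ceil _) (by exact_mod_cast hj)
              have h2 : (j : ℝ) ≤ φ j := by exact_mod_cast hφ.le_apply
              simp only [Metric.mem_closedBall]
              linarith
            have h3 := hz (φ j) w hwball
            have h4 : (1 : ℝ) / (φ j + 1) ≤ 1 / (j + 1) := by
              apply one_div_le_one_div_of_le (by positivity)
              have : (j : ℝ) ≤ φ j := by exact_mod_cast hφ.le_apply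
              linarith
            rw [dist_comm, Real.dist_eq]
            exact le_trans (le_of_lt (lt_of_lt_of_le h3 (min_le_right _ _))) h4
          refine squeeze_zero' (Eventually.of_forall fun j => dist_nonneg) hbound ?_
          exact tendsto_one_div_add_atTop_nhds_zero_nat
        have := tendsto_nhds_unique hlim2 hlim
        linarith
      have hfun : (fun w => d w zs - d b zs) = UniformOnFun.toFun (bddSets X) ξ :=
        funext fun w => (hpt w).symm
      show UniformOnFun.ofFun (bddSets X) (fun w => d w zs - d b zs) = ξ
      rw [hfun]
      rfl
    -- the "gap" sequence
    set t : ℕ → ℝ := fun n => max (Ξ x - a n) 0 with hT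
    have htnonneg : ∀ n, 0 ≤ t n := fun n => le_max_right _ _
    have ht0 : Tendsto t atTop (𝓝 0) := by
      have h1 : Tendsto (fun n => max (Ξ x - a n) 0) atTop (𝓝 (max (Ξ x - α) 0)) :=
        (tendsto_const_nhds.sub ha).max tendsto_const_nhds
      have h2 : max (Ξ x - α) 0 = 0 := max_eq_right (sub_nonpos.mpr hx)
      rw [hT]
      rw [h2] at h1
      exact h1
    -- choice of approximating points
    have hchoice : ∀ n : ℕ, ∃ y : X, d x y ≤ 2 * t n ∧ (2 * t n ≤ δ₀ → Ξ y ≤ a n) := by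
      intro n
      by_cases hpos : 0 < t n
      · by_cases hle : 2 * t n ≤ δ₀
        · obtain ⟨z, hz1, hz2⟩ := far (t n / 2) (by positivity)
          obtain ⟨γ, hγ0, hγend, hγd⟩ := hgeo x z
          set y := γ (2 * t n) with hy
          have hL : 2 * t n ≤ d x z := le_trans hle hz1
          have hdxy : d x y = 2 * t n := by
            have h := hγd 0 (2 * t n) le_rfl (by linarith) hL
            rw [hγ0] at h
            linarith
          have hdyz : d y z = d x z - 2 * t n := by
            have h := hγd (2 * t n) (d x z) (by linarith) hL le_rfl
            rw [hγend] at h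
            linarith
          refine ⟨y, hdxy.le, fun _ => ?_⟩
          have hxball : x ∈ Metric.closedBall x 2 := Metric.mem_closedBall_self (by norm_num)
          have hyball : y ∈ Metric.closedBall x 2 := by
            have := hδ₀ y (by rw [hdxy]; exact hle)
            simpa [Metric.mem_closedBall, dist_comm] using this
          have e1 := hz2 x hxball
          have e2 := hz2 y hyball
          rw [abs_lt] at e1 e2
          have htn : Ξ x - a n ≤ t n := le_max_left _ _
          have e1' := e1.1
          have e2' := e2.2
          linarith
        · refine ⟨x, ?_, fun h => absurd h hle⟩
          rw [hd_diag]
          linarith [htnonneg n]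
      · have htz : t n = 0 := le_antisymm (not_lt.mp hpos) (htnonneg n)
        have hxan : Ξ x ≤ a n := by
          have h5 : Ξ x - a n ≤ t n := le_max_left _ _
          rw [htz] at h5
          linarith
        refine ⟨x, ?_, fun _ => hxan⟩
        rw [hd_diag, htz]
        norm_num
    choose u hu1 hu2 using hchoice
    refine ⟨u, ?_, ?_⟩
    · have hev : ∀ᶠ n in atTop, t n < δ₀ / 2 := ht0.eventually (gt_mem_nhds (by positivity))
      filter_upwards [hev] with n hn
      exact hu2 n (by linarith)
    · have h1 : Tendsto (fun n => d x (u n)) atTop (𝓝 0) := by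
        refine squeeze_zero (fun n => hd_nonneg _ _) hu1 ?_
        have := ht0.const_mul (2 : ℝ)
        simpa using this
      have h2 : Tendsto (fun n => d (u n) x) atTop (𝓝 0) := (hd_conv x u).mpr h1
      rw [tendsto_iff_dist_tendsto_zero]
      have : Tendsto (fun n => d (u n) x + d x (u n)) atTop (𝓝 0) := by
        have := h2.add h1
        rwa [add_zero] at this
      simpa only [← hd_sym] using this
  · -- Part (2)
    intro φ hφ u hu x hx
    simp only [Set.mem_setOf_eq] at hu ⊢
    have h1 : Tendsto (fun k => Ξ (u k)) atTop (𝓝 (Ξ x)) := by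
      rw [tendsto_iff_dist_tendsto_zero]
      have hb2 : ∀ k, dist (Ξ (u k)) (Ξ x) ≤ dist (u k) x := by
        intro k
        rw [Real.dist_eq]
        exact distlip (u k) x
      exact squeeze_zero (fun k => dist_nonneg) hb2
        (tendsto_iff_dist_tendsto_zero.mp hx)
    have h2 : Tendsto (fun k => a (φ k)) atTop (𝓝 α) := ha.comp hφ.tendsto_atTop
    exact le_of_tendsto_of_tendsto h1 h2 (Eventually.of_forall hu)

end
end

section
/- A sequence (z_n) in X converges to a horofunction ξ if and only if for every α ∈ ℝ the sequence of closed right balls B(z_n, d(b,z_n)+α) converges to the horoball {x : ξ(x) ≤ α} in the Painlevé–Kuratowski topology. -/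
open Filter Topology

noncomputable section

variable {X : Type*}

section Aux

variable [MetricSpace X]

lemma aux_d_le_dist (d : X → X → ℝ) (hd_nonneg : ∀ x y, 0 ≤ d x y)
    (hd_sym : ∀ x y, dist x y = d x y + d y x) (x y : X) : d x y ≤ dist x y := by
  have := hd_nonneg y x; rw [hd_sym]; linarith

lemma aux_abs_d_left (d : X → X → ℝ) (hd_nonneg : ∀ x y, 0 ≤ d x y)
    (hd_tri : ∀ x y z, d x z ≤ d x y + d y z)
    (hd_sym : ∀ x y, dist x y = d x y + d y x) (x y w : X) :
    |d x w - d y w| ≤ dist x y := by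
  rw [abs_sub_le_iff]
  constructor
  · have h1 := hd_tri x y w
    have h2 := aux_d_le_dist d hd_nonneg hd_sym x y
    linarith
  · have h1 := hd_tri y x w
    have h2 := aux_d_le_dist d hd_nonneg hd_sym y x
    rw [dist_comm] at h2
    linarith

lemma aux_abs_d_right (d : X → X → ℝ) (hd_nonneg : ∀ x y, 0 ≤ d x y)
    (hd_tri : ∀ x y z, d x z ≤ d x y + d y z)
    (hd_sym : ∀ x y, dist x y = d x y + d y x) (x y w : X) :
    |d x y - d x w| ≤ dist y w := by
  rw [abs_sub_le_iff]
  constructor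
  · have h1 := hd_tri x w y
    have h2 := aux_d_le_dist d hd_nonneg hd_sym w y
    rw [dist_comm] at h2
    linarith
  · have h1 := hd_tri x y w
    have h2 := aux_d_le_dist d hd_nonneg hd_sym y w
    linarith

end Aux

/-- A sequence `(z_n)` in `X` converges to a horofunction `ξ`
if and only if for every `α ∈ ℝ` the sequence of closed right balls
`B(z_n, d(b,z_n)+α) = {x : d(x,z_n) ≤ d(b,z_n)+α}` converges to the horoball
`{x : ξ(x) ≤ α}` in the Painlevé–Kuratowski topology. -/
theorem converges_to_horofunction_iff_balls_converge
    [MetricSpace X] [ProperSpace X] (d : X → X → ℝ) (b : X)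
    (hd_nonneg : ∀ x y, 0 ≤ d x y)
    (hd_diag : ∀ x, d x x = 0)
    (hd_tri : ∀ x y z, d x z ≤ d x y + d y z)
    (hd_sym : ∀ x y, dist x y = d x y + d y x)
    (hd_conv : ∀ (x : X) (u : ℕ → X),
      Tendsto (fun n => d (u n) x) atTop (𝓝 0) ↔
      Tendsto (fun n => d x (u n)) atTop (𝓝 0))
    (hgeo : ∀ x y : X, ∃ γ : ℝ → X, γ 0 = x ∧ γ (d x y) = y ∧
      ∀ s t : ℝ, 0 ≤ s → s ≤ t → t ≤ d x y → d (γ s) (γ t) = t - s)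
    (z : ℕ → X) (ξ : UniformOnFun X ℝ (bddSets X))
    (hξ : IsHorofunction (bddSets X) d b ξ) :
    Tendsto (fun n => psiMap (bddSets X) d b (z n)) atTop (𝓝 ξ) ↔
    ∀ α : ℝ,
      PKConverges (fun n => {x : X | d x (z n) ≤ d b (z n) + α})
        {x : X | UniformOnFun.toFun (bddSets X) ξ x ≤ α} := by
  classical
  set Ξ : X → ℝ := UniformOnFun.toFun (bddSets X) ξ with hΞdef
  -- pointwise convergence from convergence in `UniformOnFun`
  have hPtGen : ∀ (F : ℕ → UniformOnFun X ℝ (bddSets X)) (f : UniformOnFun X ℝ (bddSets X)),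
      Tendsto F atTop (𝓝 f) → ∀ x : X,
      Tendsto (fun n => UniformOnFun.toFun (bddSets X) (F n) x) atTop
        (𝓝 (UniformOnFun.toFun (bddSets X) f x)) := by
    intro F f h x
    exact ((UniformOnFun.tendsto_iff_tendstoUniformlyOn.1 h) {x}
      (show _ ∈ bddSets _ from Bornology.isBounded_singleton)).tendsto_at rfl
  -- uniqueness of limits in `UniformOnFun`
  have hUniq : ∀ (F : ℕ → UniformOnFun X ℝ (bddSets X)) (f g : UniformOnFun X ℝ (bddSets X)),
      Tendsto F atTop (𝓝 f) → Tendsto F atTop (𝓝 g) → f = g := by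
    intro F f g hf hg
    have : UniformOnFun.toFun (bddSets X) f = UniformOnFun.toFun (bddSets X) g :=
      funext fun x => tendsto_nhds_unique (hPtGen F f hf x) (hPtGen F g hg x)
    exact (UniformOnFun.toFun (bddSets X)).injective this
  -- continuity of `psiMap`
  have hzconv : ∀ (w : ℕ → X) (c : X), Tendsto w atTop (𝓝 c) →
      Tendsto (fun n => psiMap (bddSets X) d b (w n)) atTop
        (𝓝 (psiMap (bddSets X) d b c)) := by
    intro w c hw
    rw [UniformOnFun.tendsto_iff_tendstoUniformlyOn]
    intro s _
    rw [Metric.tendstoUniformlyOn_iff]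
    intro ε hε
    have hd2 : ∀ᶠ n in atTop, dist (w n) c < ε / 4 := by
      have : Tendsto (fun n => dist (w n) c) atTop (𝓝 0) :=
        (tendsto_iff_dist_tendsto_zero).1 hw
      exact this.eventually_lt_const (by positivity)
    filter_upwards [hd2] with n hn x _
    have e1 := aux_abs_d_right d hd_nonneg hd_tri hd_sym x c (w n)
    have e2 := aux_abs_d_right d hd_nonneg hd_tri hd_sym b c (w n)
    have hcw : dist c (w n) < ε / 4 := by rw [dist_comm]; exact hn
    show dist ((d x c - d b c)) ((d x (w n) - d b (w n))) < ε
    rw [Real.dist_eq]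
    have h3 : |d x c - d b c - (d x (w n) - d b (w n))| ≤
        |d x c - d x (w n)| + |d b c - d b (w n)| := by
      have := abs_sub (d x c - d x (w n)) (d b c - d b (w n))
      calc |d x c - d b c - (d x (w n) - d b (w n))|
          = |(d x c - d x (w n)) - (d b c - d b (w n))| := by ring_nf
        _ ≤ |d x c - d x (w n)| + |d b c - d b (w n)| := abs_sub _ _
    nlinarith [abs_nonneg (d x c - d x (w n))]
  -- ξ is 1-Lipschitz
  have hΞlip : ∀ x y : X, |Ξ x - Ξ y| ≤ dist x y := by
    intro x y
    have hcl : IsClosed {f : UniformOnFun X ℝ (bddSets X) |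
        |UniformOnFun.toFun (bddSets X) f x - UniformOnFun.toFun (bddSets X) f y| ≤ dist x y} := by
      have hx : Continuous fun f : UniformOnFun X ℝ (bddSets X) =>
          UniformOnFun.toFun (bddSets X) f x :=
        (UniformOnFun.uniformContinuous_eval_of_mem ℝ (bddSets X) (Set.mem_singleton x)
          (show _ ∈ bddSets _ from Bornology.isBounded_singleton)).continuous
      have hy : Continuous fun f : UniformOnFun X ℝ (bddSets X) =>
          UniformOnFun.toFun (bddSets X) f y :=
        (UniformOnFun.uniformContinuous_eval_of_mem ℝ (bddSets X) (Set.mem_singleton y)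
          (show _ ∈ bddSets _ from Bornology.isBounded_singleton)).continuous
      exact isClosed_le ((hx.sub hy).abs) continuous_const
    have hsub : Set.range (psiMap (bddSets X) d b) ⊆ {f : UniformOnFun X ℝ (bddSets X) |
        |UniformOnFun.toFun (bddSets X) f x - UniformOnFun.toFun (bddSets X) f y| ≤ dist x y} := by
      rintro _ ⟨w, rfl⟩
      show |(d x w - d b w) - (d y w - d b w)| ≤ dist x y
      have h := aux_abs_d_left d hd_nonneg hd_tri hd_sym x y w
      have he : (d x w - d b w) - (d y w - d b w) = d x w - d y w := by ring
      rw [he]; exact h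
    exact (closure_minimal hsub hcl) hξ.1
  -- uniform convergence on bounded sets from pointwise convergence
  have hUnifOf : (∀ x : X, Tendsto (fun n => d x (z n) - d b (z n)) atTop (𝓝 (Ξ x))) →
      Tendsto (fun n => psiMap (bddSets X) d b (z n)) atTop (𝓝 ξ) := by
    intro hp
    rw [UniformOnFun.tendsto_iff_tendstoUniformlyOn]
    intro s hs
    rw [Metric.tendstoUniformlyOn_iff]
    intro ε hε
    have hsb : Bornology.IsBounded s := hs
    have htb : TotallyBounded s :=
      (hsb.isCompact_closure.totallyBounded).subset subset_closure
    obtain ⟨t, htfin, hcov⟩ := (Metric.totallyBounded_iff.1 htb) (ε / 4) (by positivity)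
    have hev : ∀ᶠ n in atTop, ∀ y ∈ t, |Ξ y - (d y (z n) - d b (z n))| < ε / 4 := by
      rw [eventually_all_finite htfin]
      intro y _
      have h1 : Tendsto (fun n => (d y (z n) - d b (z n)) - Ξ y) atTop (𝓝 0) := by
        have := (hp y).sub_const (Ξ y)
        rwa [sub_self] at this
      have h2 : Tendsto (fun n => |Ξ y - (d y (z n) - d b (z n))|) atTop (𝓝 0) := by
        have := h1.abs
        rw [abs_zero] at this
        refine this.congr fun n => ?_
        rw [abs_sub_comm]
      exact h2.eventually_lt_const (by positivity)
    filter_upwards [hev] with n hn x hx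
    obtain ⟨y, hy, hxy⟩ : ∃ y ∈ t, x ∈ Metric.ball y (ε / 4) := by
      have := hcov hx
      simpa using this
    have l1 : |Ξ x - Ξ y| ≤ dist x y := hΞlip x y
    have l2 : |d x (z n) - d y (z n)| ≤ dist x y :=
      aux_abs_d_left d hd_nonneg hd_tri hd_sym x y (z n)
    have hxy' : dist x y < ε / 4 := Metric.mem_ball.1 hxy
    have hn' := hn y hy
    show dist (Ξ x) (d x (z n) - d b (z n)) < ε
    rw [Real.dist_eq]
    have hsplit : Ξ x - (d x (z n) - d b (z n)) =
        (Ξ x - Ξ y) + (Ξ y - (d y (z n) - d b (z n))) + (d y (z n) - d x (z n)) := by ring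
    calc |Ξ x - (d x (z n) - d b (z n))|
        ≤ |Ξ x - Ξ y| + |Ξ y - (d y (z n) - d b (z n))| + |d y (z n) - d x (z n)| := by
          rw [hsplit]; exact (abs_add_three _ _ _)
      _ < ε := by
          have l2' : |d y (z n) - d x (z n)| ≤ dist x y := by rw [abs_sub_comm]; exact l2
          linarith
  constructor
  · -- forward direction
    intro hT α
    have hPt : ∀ x : X, Tendsto (fun n => d x (z n) - d b (z n)) atTop (𝓝 (Ξ x)) :=
      fun x => hPtGen _ _ hT x
    constructor
    · -- first PK condition
      intro x hx
      have hx' : Ξ x ≤ α := hx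
      -- eventual dichotomy
      have hEv : ∀ᶠ n in atTop, d x (z n) - d b (z n) ≤ α ∨ 0 ≤ d b (z n) + α := by
        by_contra hcon
        rw [Filter.not_eventually] at hcon
        have hcon' : ∃ᶠ n in atTop, α < d x (z n) - d b (z n) ∧ d b (z n) + α < 0 :=
          hcon.mono (by intro n hn; push_neg at hn; exact ⟨hn.1, hn.2⟩)
        obtain ⟨φ, hφmono, hφ⟩ := Filter.extraction_of_frequently_atTop hcon'
        have hsubt : Tendsto (fun k => d x (z (φ k)) - d b (z (φ k))) atTop (𝓝 (Ξ x)) :=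
          (hPt x).comp hφmono.tendsto_atTop
        have hαΞ : α ≤ Ξ x :=
          le_of_tendsto_of_tendsto' tendsto_const_nhds hsubt fun k => le_of_lt (hφ k).1
        have hΞα : Ξ x = α := le_antisymm hx' hαΞ
        have hlim : Tendsto (fun k => (d x (z (φ k)) - d b (z (φ k))) - α) atTop (𝓝 0) := by
          have := hsubt.sub_const α
          rwa [hΞα, sub_self] at this
        have hdx0 : Tendsto (fun k => d x (z (φ k))) atTop (𝓝 0) := by
          refine squeeze_zero (fun k => hd_nonneg x _) (fun k => ?_) hlim
          have := (hφ k).2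
          linarith
        have hdx0' : Tendsto (fun k => d (z (φ k)) x) atTop (𝓝 0) :=
          (hd_conv x fun k => z (φ k)).2 hdx0
        have hdist : Tendsto (fun k => z (φ k)) atTop (𝓝 x) := by
          apply tendsto_iff_dist_tendsto_zero.2
          have heq : (fun k => dist (z (φ k)) x) =
              fun k => d (z (φ k)) x + d x (z (φ k)) := funext fun k => hd_sym _ _
          rw [heq]
          simpa using hdx0'.add hdx0
        have h1 := hzconv (fun k => z (φ k)) x hdist
        have h2 : Tendsto (fun k => psiMap (bddSets X) d b (z (φ k))) atTop (𝓝 ξ) :=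
          hT.comp hφmono.tendsto_atTop
        exact hξ.2 ⟨x, hUniq _ _ _ h1 h2⟩
      -- construct the approximating sequence along geodesics
      choose γ hγ0 hγ1 hγd using fun n => hgeo x (z n)
      set εf : ℕ → ℝ := fun n => d x (z n) - d b (z n) - α with hεf
      set u : ℕ → X := fun n =>
        if 0 < εf n ∧ εf n ≤ d x (z n) then γ n (εf n) else x with hu
      have hucase : ∀ n, (0 < εf n ∧ εf n ≤ d x (z n) ∧ u n = γ n (εf n)) ∨
          (u n = x) := by
        intro n
        by_cases hc : 0 < εf n ∧ εf n ≤ d x (z n)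
        · exact Or.inl ⟨hc.1, hc.2, by rw [hu]; simp only [if_pos hc]⟩
        · exact Or.inr (by rw [hu]; simp only [if_neg hc])
      refine ⟨u, ?_, ?_⟩
      · -- eventual membership
        filter_upwards [hEv] with n hn
        show u n ∈ {y : X | d y (z n) ≤ d b (z n) + α}
        simp only [Set.mem_setOf_eq]
        by_cases hc : 0 < εf n ∧ εf n ≤ d x (z n)
        · have hun : u n = γ n (εf n) := by rw [hu]; simp only [if_pos hc]
          rw [hun]
          have hgd := hγd n (εf n) (d x (z n)) (le_of_lt hc.1) hc.2 le_rfl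
          rw [hγ1 n] at hgd
          rw [hgd, hεf]
          simp only []
          linarith
        · have hun : u n = x := by rw [hu]; simp only [if_neg hc]
          rw [hun]
          rcases hn with h | h
          · linarith
          · have h2 : εf n ≤ d x (z n) := by
              simp only [hεf]; linarith
            have h3 : εf n ≤ 0 := by
              by_contra h4
              exact hc ⟨lt_of_not_ge fun h5 => h4 (h5), h2⟩
            simp only [hεf] at h3
            linarith
      · -- convergence of u to x
        have hbound : ∀ n, d x (u n) ≤ max (εf n) 0 := by
          intro n
          rcases hucase n with ⟨hp, hle, hun⟩ | hun
          · rw [hun]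
            have hgd := hγd n 0 (εf n) le_rfl (le_of_lt hp) hle
            rw [hγ0 n] at hgd
            rw [hgd]
            simp only [sub_zero]
            exact le_max_left _ _
          · rw [hun, hd_diag]
            exact le_max_right _ _
        have hεlim : Tendsto (fun n => max (εf n) 0) atTop (𝓝 0) := by
          have h1 : Tendsto εf atTop (𝓝 (Ξ x - α)) := (hPt x).sub_const α
          have h2 := h1.max (tendsto_const_nhds (x := (0 : ℝ)))
          rwa [max_eq_right (by linarith)] at h2
        have hdxu : Tendsto (fun n => d x (u n)) atTop (𝓝 0) :=
          squeeze_zero (fun n => hd_nonneg x _) hbound hεlim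
        have hdux : Tendsto (fun n => d (u n) x) atTop (𝓝 0) :=
          (hd_conv x u).2 hdxu
        apply tendsto_iff_dist_tendsto_zero.2
        have heq : (fun n => dist (u n) x) = fun n => d (u n) x + d x (u n) :=
          funext fun n => hd_sym _ _
        rw [heq]
        simpa using hdux.add hdxu
    · -- second PK condition
      intro φ hφmono u hu x hx
      have hA : Tendsto (fun k => d x (z (φ k)) - d b (z (φ k))) atTop (𝓝 (Ξ x)) :=
        (hPt x).comp hφmono.tendsto_atTop
      have hB : ∀ k, d x (z (φ k)) - d b (z (φ k)) ≤ dist x (u k) + α := by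
        intro k
        have h1 := hd_tri x (u k) (z (φ k))
        have h2 : d (u k) (z (φ k)) ≤ d b (z (φ k)) + α := hu k
        have h3 := aux_d_le_dist d hd_nonneg hd_sym x (u k)
        linarith
      have hC : Tendsto (fun k => dist x (u k) + α) atTop (𝓝 (0 + α)) := by
        have h : Tendsto (fun k => dist x (u k)) atTop (𝓝 (dist x x)) :=
          tendsto_const_nhds.dist hx
        rw [dist_self] at h
        exact h.add tendsto_const_nhds
      have := le_of_tendsto_of_tendsto' hA hC hB
      show Ξ x ≤ α
      linarith
  · -- converse direction
    intro hPK
    apply hUnifOf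
    intro x
    rw [Metric.tendsto_nhds]
    intro ε hε
    obtain ⟨u, humem, hux⟩ := (hPK (Ξ x)).1 x (show Ξ x ≤ Ξ x from le_refl _)
    have hup : ∀ᶠ n in atTop, d x (z n) - d b (z n) < Ξ x + ε := by
      have hd1 : ∀ᶠ n in atTop, dist x (u n) < ε := by
        have h : Tendsto (fun n => dist x (u n)) atTop (𝓝 (dist x x)) :=
          tendsto_const_nhds.dist hux
        rw [dist_self] at h
        exact h.eventually_lt_const hε
      filter_upwards [humem, hd1] with n hn hdn
      have h1 := hd_tri x (u n) (z n)
      have h2 : d (u n) (z n) ≤ d b (z n) + Ξ x := hn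
      have h3 := aux_d_le_dist d hd_nonneg hd_sym x (u n)
      linarith
    have hlow : ∀ᶠ n in atTop, Ξ x - ε < d x (z n) - d b (z n) := by
      by_contra hcon
      rw [Filter.not_eventually] at hcon
      have hcon' : ∃ᶠ n in atTop, d x (z n) ≤ d b (z n) + (Ξ x - ε) :=
        hcon.mono (by intro n hn; push_neg at hn; linarith)
      obtain ⟨φ, hφmono, hφ⟩ := Filter.extraction_of_frequently_atTop hcon'
      have hmem : ∀ k, x ∈ (fun n => {y : X | d y (z n) ≤ d b (z n) + (Ξ x - ε)}) (φ k) :=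
        fun k => hφ k
      have := (hPK (Ξ x - ε)).2 φ hφmono (fun _ => x) hmem x tendsto_const_nhds
      have : Ξ x ≤ Ξ x - ε := this
      linarith
    filter_upwards [hup, hlow] with n h1 h2
    rw [Real.dist_eq, abs_sub_lt_iff]
    constructor <;> linarith

end
end

section
/- For a bounded open convex domain D, the reverse-Funk distance function extends continuously from D × D to D × closure(D), and a sequence z_n in D converges to the reverse-Funk horofunction r_x = R(·,x) − R(b,x), x ∈ ∂D, if and only if z_n → x in the Euclidean topology. -/
open Filter Topology

noncomputable section
open scoped Classical

/-- The Funk metric on a convex domain `D`: for `x ≠ y`,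
`funk D x y = log (‖x - z‖ / ‖y - z‖)` where `z = x + T • (y - x)` is the point
where the ray from `x` through `y` meets `∂D` (here
`T = sSup {t | x + t • (y - x) ∈ D}`, so that
`‖x - z‖ / ‖y - z‖ = T / (T - 1)`). -/
def funk {n : ℕ} (D : Set (EuclideanSpace ℝ (Fin n)))
    (x y : EuclideanSpace ℝ (Fin n)) : ℝ :=
  if x = y then 0
  else Real.log (sSup {t : ℝ | x + t • (y - x) ∈ D} /
    (sSup {t : ℝ | x + t • (y - x) ∈ D} - 1))

/-!
For `y ∈ closure D` and `p ∈ D` let `T` be the parameter at which the ray `t ↦ y + t • (p - y)`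
leaves `D`; then `funk D y p = -log (1 - T⁻¹)`. Openness of `D` makes `T` lower semicontinuous,
convexity and closedness of `closure D` make it upper semicontinuous, and `T → ∞` at the
diagonal; hence the reverse-Funk distance is continuous on `D × closure D`.

If `z → x`, uniform convergence on a Hilbert-bounded set `s` follows from uniform continuity on
`K × closure D`, where `K ⊆ D` is a homothetic copy of `closure D` of ratio `< 1` containing `s`.
Conversely, a subsequential limit `x'` of `z` (which exists by compactness) has the same
horofunction as `x`, so `funk D x - funk D x' = c` on `D`. Along the segment from `x` to `b`,
`funk D x → 0`, and along the one from `x'` to `b`, `funk D x' → 0`; with `funk ≥ 0` this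
forces `c = 0`, so `funk D x'` tends to `0` along a path converging to `x`. Since
`‖p - y‖ ≤ diam D * (1 - exp (-funk D y p))`, that path converges to `x'` too, so `x' = x`.
-/

open Set Metric Bornology

section Ray

variable {E : Type*} [NormedAddCommGroup E] [NormedSpace ℝ E] {D : Set E} {y p : E} {s t : ℝ}

def exitParam (D : Set E) (y p : E) : ℝ :=
  sSup {t : ℝ | y + t • (p - y) ∈ D}

lemma add_smul_sub_mem_of_lt (hD : Convex ℝ D) (hDo : IsOpen D) (hy : y ∈ closure D)
    (hp : p ∈ D) (hs : y + s • (p - y) ∈ closure D) (ht : 0 < t) (hts : t < s) :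
    y + t • (p - y) ∈ D := by
  rw [← hDo.interior_eq] at hp ⊢
  rcases le_or_gt t 1 with ht1 | ht1
  · exact hD.add_smul_sub_mem_interior' hy hp ⟨ht, ht1⟩
  · -- `y + t • (p - y)` lies on the segment from `y + s • (p - y)` to `p`
    have hs1 : 0 < s - 1 := by linarith
    convert hD.add_smul_sub_mem_interior' hs hp (t := (s - t) / (s - 1))
      ⟨by positivity, (div_le_one hs1).2 (by linarith)⟩ using 1
    match_scalars <;> field_simp <;> ring

lemma eventually_add_smul_sub_mem (hD : Convex ℝ D) (hDo : IsOpen D) (hy : y ∈ closure D)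
    (hp : p ∈ D) : ∀ᶠ t in 𝓝[>] (0 : ℝ), y + t • (p - y) ∈ D := by
  filter_upwards [Ioo_mem_nhdsGT one_pos] with t ⟨ht0, ht1⟩
  exact add_smul_sub_mem_of_lt hD hDo hy hp (by simpa using subset_closure hp) ht0 ht1

lemma mul_norm_le_diam_of_mem (hDb : IsBounded D) (hy : y ∈ closure D)
    (ht : y + t • (p - y) ∈ D) : t * ‖p - y‖ ≤ diam D := by
  calc t * ‖p - y‖ ≤ dist (y + t • (p - y)) y := by
        rw [dist_eq_norm, add_sub_cancel_left, norm_smul, Real.norm_eq_abs]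
        gcongr
        exact le_abs_self t
    _ ≤ diam D := by
        rw [← diam_closure]
        exact dist_le_diam_of_mem hDb.closure (subset_closure ht) hy

lemma bddAbove_exitParam_set (hDb : IsBounded D) (hy : y ∈ closure D) (hne : y ≠ p) :
    BddAbove {t : ℝ | y + t • (p - y) ∈ D} := by
  have hpy : 0 < ‖p - y‖ := norm_pos_iff.2 (sub_ne_zero.2 hne.symm)
  exact ⟨diam D / ‖p - y‖, fun t ht => (le_div_iff₀ hpy).2 (mul_norm_le_diam_of_mem hDb hy ht)⟩

lemma one_mem_exitParam_set (hp : p ∈ D) : (1 : ℝ) ∈ {t : ℝ | y + t • (p - y) ∈ D} := by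
  simpa using hp

lemma exitParam_mul_norm_le_diam (hDb : IsBounded D) (hy : y ∈ closure D) (hp : p ∈ D) :
    exitParam D y p * ‖p - y‖ ≤ diam D := by
  rcases eq_or_ne y p with rfl | hne
  · simpa using diam_nonneg
  have hpy : 0 < ‖p - y‖ := norm_pos_iff.2 (sub_ne_zero.2 hne.symm)
  exact (le_div_iff₀ hpy).1 <| csSup_le ⟨1, one_mem_exitParam_set hp⟩
    fun t ht => (le_div_iff₀ hpy).2 (mul_norm_le_diam_of_mem hDb hy ht)

lemma one_lt_exitParam (hDo : IsOpen D) (hDb : IsBounded D) (hy : y ∈ closure D) (hp : p ∈ D)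
    (hne : y ≠ p) : 1 < exitParam D y p := by
  have hopen : IsOpen {t : ℝ | y + t • (p - y) ∈ D} := hDo.preimage (by fun_prop)
  have hnear : ∀ᶠ t in 𝓝[>] (1 : ℝ), y + t • (p - y) ∈ D :=
    nhdsWithin_le_nhds (hopen.mem_nhds (one_mem_exitParam_set hp))
  obtain ⟨t, ht, ht1⟩ := (hnear.and self_mem_nhdsWithin).exists
  exact ht1.trans_le (le_csSup (bddAbove_exitParam_set hDb hy hne) ht)

lemma add_smul_sub_mem_of_lt_exitParam (hD : Convex ℝ D) (hDo : IsOpen D) (hy : y ∈ closure D)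
    (hp : p ∈ D) (ht : 0 < t) (htT : t < exitParam D y p) : y + t • (p - y) ∈ D := by
  obtain ⟨s, hs, hts⟩ := exists_lt_of_lt_csSup ⟨1, one_mem_exitParam_set hp⟩ htT
  exact add_smul_sub_mem_of_lt hD hDo hy hp (subset_closure hs) ht hts

lemma le_exitParam_of_mem_closure (hD : Convex ℝ D) (hDo : IsOpen D) (hDb : IsBounded D)
    (hy : y ∈ closure D) (hp : p ∈ D) (hne : y ≠ p) (hs : y + s • (p - y) ∈ closure D) :
    s ≤ exitParam D y p := by
  refine le_of_forall_lt_imp_le_of_dense fun t hts => ?_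
  rcases le_or_gt t 1 with ht1 | ht1
  · exact ht1.trans (one_lt_exitParam hDo hDb hy hp hne).le
  · exact le_csSup (bddAbove_exitParam_set hDb hy hne)
      (add_smul_sub_mem_of_lt hD hDo hy hp hs (by linarith) hts)

lemma tendsto_exitParam (hD : Convex ℝ D) (hDo : IsOpen D) (hDb : IsBounded D)
    (hy : y ∈ closure D) (hp : p ∈ D) (hne : y ≠ p) :
    Tendsto (fun q : E × E => exitParam D q.1 q.2) (𝓝[closure D ×ˢ D] (y, p))
      (𝓝 (exitParam D y p)) := by
  have hT := one_lt_exitParam hDo hDb hy hp hne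
  have hray (t : ℝ) : Continuous fun q : E × E => q.1 + t • (q.2 - q.1) := by fun_prop
  have hdom : ∀ᶠ q : E × E in 𝓝[closure D ×ˢ D] (y, p), q ∈ closure D ×ˢ D ∧ q.1 ≠ q.2 :=
    Filter.Eventually.and self_mem_nhdsWithin <| nhdsWithin_le_nhds <|
      (isOpen_ne_fun continuous_fst continuous_snd).mem_nhds hne
  refine tendsto_order.2 ⟨fun a ha => ?_, fun a ha => ?_⟩
  · obtain ⟨t, hat, htT⟩ := exists_between (max_lt ha (zero_lt_one.trans hT))
    have hmem : ∀ᶠ q : E × E in 𝓝 (y, p), q.1 + t • (q.2 - q.1) ∈ D :=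
      (hray t).continuousAt.preimage_mem_nhds <| hDo.mem_nhds <|
        add_smul_sub_mem_of_lt_exitParam hD hDo hy hp ((le_max_right _ _).trans_lt hat) htT
    filter_upwards [hdom, nhdsWithin_le_nhds hmem] with q ⟨⟨hq1, _⟩, hq⟩ hqt
    exact ((le_max_left _ _).trans_lt hat).trans_le
      (le_csSup (bddAbove_exitParam_set hDb hq1 hq) hqt)
  · obtain ⟨t, hTt, hta⟩ := exists_between ha
    have hout : ∀ᶠ q : E × E in 𝓝 (y, p), q.1 + t • (q.2 - q.1) ∉ closure D :=
      (hray t).continuousAt.preimage_mem_nhds <| isClosed_closure.isOpen_compl.mem_nhds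
        fun h => hTt.not_ge (le_exitParam_of_mem_closure hD hDo hDb hy hp hne h)
    filter_upwards [hdom, nhdsWithin_le_nhds hout] with q ⟨⟨hq1, hq2⟩, _⟩ hqt
    refine lt_of_le_of_lt (not_lt.1 fun h => hqt (subset_closure ?_)) hta
    exact add_smul_sub_mem_of_lt_exitParam hD hDo hq1 hq2 (by linarith) h

end Ray

section Funk

variable {n : ℕ} {D : Set (EuclideanSpace ℝ (Fin n))} {x x' y p b : EuclideanSpace ℝ (Fin n)}

lemma funk_self : funk D y y = 0 := if_pos rfl

lemma funk_of_ne (hne : y ≠ p) :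
    funk D y p = Real.log (exitParam D y p / (exitParam D y p - 1)) :=
  if_neg hne

lemma exp_neg_funk (hDo : IsOpen D) (hDb : IsBounded D) (hy : y ∈ closure D) (hp : p ∈ D)
    (hne : y ≠ p) : Real.exp (-funk D y p) = 1 - (exitParam D y p)⁻¹ := by
  have hT := one_lt_exitParam hDo hDb hy hp hne
  rw [funk_of_ne hne, Real.exp_neg, Real.exp_log (div_pos (by linarith) (by linarith))]
  field_simp

lemma funk_nonneg (hDo : IsOpen D) (hDb : IsBounded D) (hy : y ∈ closure D) (hp : p ∈ D) :
    0 ≤ funk D y p := by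
  rcases eq_or_ne y p with rfl | hne
  · rw [funk_self]
  have hT := one_lt_exitParam hDo hDb hy hp hne
  have : Real.exp (-funk D y p) ≤ 1 := by
    rw [exp_neg_funk hDo hDb hy hp hne, sub_le_self_iff]
    positivity
  simpa using this

lemma one_sub_inv_le_exp_neg_funk (hDo : IsOpen D) (hDb : IsBounded D)
    (hy : y ∈ closure D) (hp : p ∈ D) {N : ℝ} (hN : 0 < N) (hmem : y + N • (p - y) ∈ D) :
    1 - N⁻¹ ≤ Real.exp (-funk D y p) := by
  rcases eq_or_ne y p with rfl | hne
  · simp [funk_self, hN.le]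
  rw [exp_neg_funk hDo hDb hy hp hne]
  gcongr
  exact le_csSup (bddAbove_exitParam_set hDb hy hne) hmem

lemma norm_sub_le_diam_mul_one_sub_exp_neg_funk (hDo : IsOpen D) (hDb : IsBounded D)
    (hy : y ∈ closure D) (hp : p ∈ D) :
    ‖p - y‖ ≤ diam D * (1 - Real.exp (-funk D y p)) := by
  rcases eq_or_ne y p with rfl | hne
  · simp [funk_self]
  have hT := one_lt_exitParam hDo hDb hy hp hne
  rw [exp_neg_funk hDo hDb hy hp hne, sub_sub_cancel, ← div_eq_mul_inv,
    le_div_iff₀ (by linarith), mul_comm]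
  exact exitParam_mul_norm_le_diam hDb hy hp

lemma tendsto_funk_diag (hDo : IsOpen D) (hDb : IsBounded D) (hy : y ∈ D) :
    Tendsto (fun q : _ × _ => funk D q.1 q.2) (𝓝[closure D ×ˢ D] (y, y)) (𝓝 0) := by
  suffices h : Tendsto (fun q : _ × _ => Real.exp (-funk D q.1 q.2))
      (𝓝[closure D ×ˢ D] (y, y)) (𝓝 1) by
    simpa using (h.log one_ne_zero).neg
  refine tendsto_order.2 ⟨fun a ha => ?_, fun a ha => ?_⟩
  · have hlim : Tendsto (fun N : ℝ => 1 - N⁻¹) atTop (𝓝 1) := by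
      simpa using tendsto_inv_atTop_zero.const_sub (1 : ℝ)
    obtain ⟨N, hN, haN⟩ := ((eventually_gt_atTop 0).and (hlim.eventually (lt_mem_nhds ha))).exists
    -- near `(y, y)` the ray still lies in `D` at parameter `N`, so `exitParam ≥ N`
    have hmem : ∀ᶠ q : _ × _ in 𝓝 (y, y), q.1 + N • (q.2 - q.1) ∈ D :=
      (by fun_prop : Continuous fun q : EuclideanSpace ℝ (Fin n) × _ => q.1 + N • (q.2 - q.1))
        |>.continuousAt.preimage_mem_nhds (hDo.mem_nhds (by simpa using hy))
    filter_upwards [self_mem_nhdsWithin, nhdsWithin_le_nhds hmem] with q ⟨hq1, hq2⟩ hq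
    exact haN.trans_le (one_sub_inv_le_exp_neg_funk hDo hDb hq1 hq2 hN hq)
  · filter_upwards [self_mem_nhdsWithin] with q ⟨hq1, hq2⟩
    exact (Real.exp_le_one_iff.2 (neg_nonpos.2 (funk_nonneg hDo hDb hq1 hq2))).trans_lt ha

lemma continuousOn_funk (hD : Convex ℝ D) (hDo : IsOpen D) (hDb : IsBounded D) :
    ContinuousOn (fun q : _ × _ => funk D q.1 q.2) (closure D ×ˢ D) := by
  rintro ⟨y, p⟩ ⟨hy, hp⟩
  rcases eq_or_ne y p with rfl | hne
  · simpa [ContinuousWithinAt, funk_self] using tendsto_funk_diag hDo hDb hp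
  have hT := one_lt_exitParam hDo hDb hy hp hne
  have hlim := tendsto_exitParam hD hDo hDb hy hp hne
  have heq : (fun q : _ × _ => Real.log (exitParam D q.1 q.2 / (exitParam D q.1 q.2 - 1)))
      =ᶠ[𝓝[closure D ×ˢ D] (y, p)] fun q => funk D q.1 q.2 := by
    filter_upwards [nhdsWithin_le_nhds
      ((isOpen_ne_fun continuous_fst continuous_snd).mem_nhds hne)] with q hq
    exact (funk_of_ne hq).symm
  refine Tendsto.congr' heq ?_
  show Tendsto _ _ (𝓝 (funk D y p))
  rw [funk_of_ne hne]
  exact (hlim.div (hlim.sub_const 1) (by linarith)).log (div_pos (by linarith) (by linarith)).ne'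

lemma tendsto_funk_add_smul_sub (hD : Convex ℝ D) (hDo : IsOpen D) (hDb : IsBounded D)
    (hy : y ∈ closure D) (hb : b ∈ D) :
    Tendsto (fun t : ℝ => funk D y (y + t • (b - y))) (𝓝[>] 0) (𝓝 0) := by
  suffices h : Tendsto (fun t : ℝ => Real.exp (-funk D y (y + t • (b - y)))) (𝓝[>] 0) (𝓝 1) by
    simpa using (h.log one_ne_zero).neg
  have hlow : Tendsto (fun t : ℝ => 1 - t) (𝓝[>] 0) (𝓝 1) := by
    simpa using ((continuous_sub_left (1 : ℝ)).tendsto 0).mono_left nhdsWithin_le_nhds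
  have hmem := eventually_add_smul_sub_mem hD hDo hy hb
  refine tendsto_of_tendsto_of_tendsto_of_le_of_le' hlow tendsto_const_nhds ?_ ?_
  · filter_upwards [hmem, self_mem_nhdsWithin] with t ht (ht0 : 0 < t)
    -- the ray from `y` through `y + t • (b - y)` reaches `b` at parameter `t⁻¹`
    have hb' : y + t⁻¹ • (y + t • (b - y) - y) = b := by
      simp [smul_smul, ht0.ne']
    simpa using one_sub_inv_le_exp_neg_funk hDo hDb hy ht (inv_pos.2 ht0) (hb'.symm ▸ hb)
  · filter_upwards [hmem] with t ht
    exact Real.exp_le_one_iff.2 (neg_nonpos.2 (funk_nonneg hDo hDb hy ht))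

lemma eq_of_funk_eq_funk_add_const (hD : Convex ℝ D) (hDo : IsOpen D) (hDb : IsBounded D)
    (hx : x ∈ closure D) (hx' : x' ∈ closure D) (hb : b ∈ D) {c : ℝ}
    (hc : ∀ p ∈ D, funk D x p = funk D x' p + c) : x = x' := by
  have hmem := eventually_add_smul_sub_mem hD hDo hx hb
  have hc_nonneg : 0 ≤ c := by
    have h := (tendsto_funk_add_smul_sub hD hDo hDb hx' hb).add_const c
    rw [zero_add] at h
    refine ge_of_tendsto h ?_
    filter_upwards [eventually_add_smul_sub_mem hD hDo hx' hb] with t ht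
    exact hc _ ht ▸ funk_nonneg hDo hDb hx ht
  have hlim : Tendsto (fun t : ℝ => funk D x' (x + t • (b - x))) (𝓝[>] 0) (𝓝 (-c)) := by
    have h := (tendsto_funk_add_smul_sub hD hDo hDb hx hb).sub_const c
    rw [zero_sub] at h
    refine h.congr' ?_
    filter_upwards [hmem] with t ht
    rw [hc _ ht, add_sub_cancel_right]
  obtain rfl : c = 0 := le_antisymm (neg_nonneg.1 <| ge_of_tendsto hlim <| by
    filter_upwards [hmem] with t ht
    exact funk_nonneg hDo hDb hx' ht) hc_nonneg
  have hto_x : Tendsto (fun t : ℝ => x + t • (b - x)) (𝓝[>] 0) (𝓝 x) := by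
    simpa using ((by fun_prop : Continuous fun t : ℝ => x + t • (b - x)).tendsto 0).mono_left
      nhdsWithin_le_nhds
  have hto_x' : Tendsto (fun t : ℝ => x + t • (b - x)) (𝓝[>] 0) (𝓝 x') := by
    rw [tendsto_iff_norm_sub_tendsto_zero]
    refine squeeze_zero' (g := fun t => diam D * (1 - Real.exp (-funk D x' (x + t • (b - x)))))
      (Eventually.of_forall fun _ => norm_nonneg _) ?_ ?_
    · filter_upwards [hmem] with t ht
      exact norm_sub_le_diam_mul_one_sub_exp_neg_funk hDo hDb hx' ht
    · simpa using (hlim.neg.rexp.const_sub 1).const_mul (diam D)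
  exact tendsto_nhds_unique hto_x hto_x'

lemma exists_isCompact_of_funk_le (hD : Convex ℝ D) (hDo : IsOpen D) (hDb : IsBounded D)
    {p₀ : EuclideanSpace ℝ (Fin n)} (hp₀ : p₀ ∈ D) {s : Set (EuclideanSpace ℝ (Fin n))}
    (hs : s ⊆ D) {M : ℝ} (hM : ∀ p ∈ s, funk D p₀ p ≤ M) :
    ∃ K, IsCompact K ∧ K ⊆ D ∧ s ⊆ K := by
  obtain ⟨r, hr, hr1⟩ := exists_between (max_lt zero_lt_one (sub_lt_self 1 (Real.exp_pos (-M))))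
  rw [max_lt_iff] at hr
  have hp₀' : p₀ ∈ interior D := hDo.interior_eq.symm ▸ hp₀
  refine ⟨(fun c => p₀ + r • (c - p₀)) '' closure D, hDb.isCompact_closure.image (by fun_prop),
    ?_, fun p hp => ⟨p₀ + r⁻¹ • (p - p₀), subset_closure ?_, by simp [smul_smul, hr.1.ne']⟩⟩
  · rintro _ ⟨c, hc, rfl⟩
    have := hD.add_smul_sub_mem_interior' hc hp₀' (t := 1 - r) ⟨by linarith, by linarith⟩
    rw [hDo.interior_eq] at this
    convert this using 1
    module
  rcases eq_or_ne p₀ p with rfl | hne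
  · simpa using hp₀
  have hT := one_lt_exitParam hDo hDb (subset_closure hp₀) (hs hp) hne
  have hTr : (exitParam D p₀ p)⁻¹ < r := by
    have h := exp_neg_funk hDo hDb (subset_closure hp₀) (hs hp) hne
    have := Real.exp_le_exp.2 (neg_le_neg (hM p hp))
    linarith
  exact add_smul_sub_mem_of_lt_exitParam hD hDo (subset_closure hp₀) (hs hp) (inv_pos.2 hr.1)
    ((inv_lt_comm₀ (zero_lt_one.trans hT) hr.1).1 hTr)

lemma tendstoUniformlyOn_funk (hD : Convex ℝ D) (hDo : IsOpen D) (hDb : IsBounded D)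
    {K : Set (EuclideanSpace ℝ (Fin n))} (hK : IsCompact K) (hKD : K ⊆ D) (hx : x ∈ closure D)
    {ι : Type*} {l : Filter ι} {z : ι → EuclideanSpace ℝ (Fin n)}
    (hz : Tendsto z l (𝓝[closure D] x)) :
    TendstoUniformlyOn (fun i => funk D (z i)) (funk D x) l K := by
  have hU : UniformContinuousOn ↿(funk D) (closure D ×ˢ K) :=
    (hDb.isCompact_closure.prod hK).uniformContinuousOn_of_continuous
      ((continuousOn_funk hD hDo hDb).mono (prod_mono subset_rfl hKD))
  have hlim : TendstoUniformlyOn (funk D) (funk D x) (𝓝[closure D] x) K :=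
    hU.tendstoUniformlyOn hx
  exact fun u hu => hz.eventually (hlim u hu)

lemma tendsto_of_forall_tendsto_funk_sub_funk (hD : Convex ℝ D) (hDo : IsOpen D)
    (hDb : IsBounded D) (hx : x ∈ closure D) (hb : b ∈ D) {z : ℕ → EuclideanSpace ℝ (Fin n)}
    (hz : ∀ m, z m ∈ D)
    (h : ∀ p ∈ D, Tendsto (fun m => funk D (z m) p - funk D (z m) b) atTop
      (𝓝 (funk D x p - funk D x b))) :
    Tendsto z atTop (𝓝 x) := by
  refine tendsto_of_subseq_tendsto fun ns hns => ?_
  obtain ⟨x', hx', ms, hms, hlim⟩ :=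
    hDb.isCompact_closure.tendsto_subseq fun k => subset_closure (hz (ns k))
  refine ⟨ms, ?_⟩
  have hfunk (p : EuclideanSpace ℝ (Fin n)) (hp : p ∈ D) :
      Tendsto (fun k => funk D (z (ns (ms k))) p) atTop (𝓝 (funk D x' p)) :=
    (continuousOn_funk hD hDo hDb (x', p) ⟨hx', hp⟩).tendsto.comp <| tendsto_nhdsWithin_iff.2
      ⟨hlim.prodMk_nhds tendsto_const_nhds,
        Eventually.of_forall fun k => ⟨subset_closure (hz _), hp⟩⟩
  obtain rfl : x = x' := eq_of_funk_eq_funk_add_const hD hDo hDb hx hx' hb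
    (c := funk D x b - funk D x' b) fun p hp => by
      have := tendsto_nhds_unique ((h p hp).comp (hns.comp hms.tendsto_atTop))
        ((hfunk p hp).sub (hfunk b hb))
      linarith
  exact hlim

end Funk

/-- For a bounded open convex domain `D`, the reverse-Funk
distance `R(x,y) = F(y,x)` extends continuously from `D × D` to `D × closure D`,
and a sequence `z_n` in `D` converges to the reverse-Funk horofunction
`r_x = R(·,x) − R(b,x)`, `x ∈ ∂D` (i.e. `R(·,z_n) − R(b,z_n) → r_x` uniformly on
sets bounded in the Hilbert metric), if and only if `z_n → x` in the Euclidean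
topology. -/
theorem reverseFunk_extends_and_horofunction_convergence {n : ℕ}
    (D : Set (EuclideanSpace ℝ (Fin n)))
    (hopen : IsOpen D) (hbdd : Bornology.IsBounded D) (hconv : Convex ℝ D)
    (b : EuclideanSpace ℝ (Fin n)) (hb : b ∈ D) :
    ∃ Rbar : EuclideanSpace ℝ (Fin n) → EuclideanSpace ℝ (Fin n) → ℝ,
      ContinuousOn (fun p : EuclideanSpace ℝ (Fin n) × EuclideanSpace ℝ (Fin n) =>
        Rbar p.1 p.2) (D ×ˢ closure D) ∧
      (∀ x ∈ D, ∀ y ∈ D, Rbar x y = funk D y x) ∧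
      (∀ x ∈ frontier D, ∀ z : ℕ → EuclideanSpace ℝ (Fin n), (∀ m, z m ∈ D) →
        (Tendsto z atTop (𝓝 x) ↔
          ∀ s : Set (EuclideanSpace ℝ (Fin n)), s ⊆ D →
            (∃ M : ℝ, ∀ p ∈ s, ∀ q ∈ s, funk D p q + funk D q p ≤ M) →
            TendstoUniformlyOn (fun m p => Rbar p (z m) - Rbar b (z m))
              (fun p => Rbar p x - Rbar b x) atTop s)) := by
  refine ⟨fun p y => funk D y p, (continuousOn_funk hconv hopen hbdd).comp
    continuous_swap.continuousOn fun q hq => ⟨hq.2, hq.1⟩, fun _ _ _ _ => rfl,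
    fun x hx z hz => ⟨fun hzx s hsD ⟨M, hM⟩ => ?_, fun H => ?_⟩⟩
  · rcases s.eq_empty_or_nonempty with rfl | ⟨p₀, hp₀⟩
    · exact tendstoUniformlyOn_empty
    obtain ⟨K, hK, hKD, hsK⟩ := exists_isCompact_of_funk_le hconv hopen hbdd (hsD hp₀) hsD
      fun p hp => by
        linarith [hM p₀ hp₀ p hp, funk_nonneg hopen hbdd (subset_closure (hsD hp)) (hsD hp₀)]
    have hU := tendstoUniformlyOn_funk hconv hopen hbdd (hK.insert b) (insert_subset hb hKD)
      (frontier_subset_closure hx) (tendsto_nhdsWithin_iff.2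
        ⟨hzx, Eventually.of_forall fun m => subset_closure (hz m)⟩)
    exact (hU.mono (hsK.trans (subset_insert b K))).sub
      ((hU.tendsto_at (mem_insert b K)).tendstoUniformlyOn_const s)
  · refine tendsto_of_forall_tendsto_funk_sub_funk hconv hopen hbdd (frontier_subset_closure hx)
      hb hz fun p hp => (H {p, b} (insert_subset hp (singleton_subset_iff.2 hb))
        ⟨funk D p b + funk D b p, ?_⟩).tendsto_at (mem_insert p _)
    have hpb := funk_nonneg hopen hbdd (subset_closure hp) hb
    have hbp := funk_nonneg hopen hbdd (subset_closure hb) hp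
    have hpp : funk D p p = 0 := funk_self
    have hbb : funk D b b = 0 := funk_self
    rintro _ (rfl | rfl) _ (rfl | rfl) <;> linarith
end
end

section
/- For an open proper convex cone C ⊂ ℝ^{n+1} with base-point b ∈ C and z ∈ C, the Legendre–Fenchel conjugate of j_{C,z}(x) := M(x/z;C)/M(b/z;C) is the characteristic function (0 on the set, +∞ off it) of Z_{C,z} := C* ∩ {u : M(b/z;C)·⟨u,z⟩ ≤ 1}. -/
open scoped RealInnerProductSpace Classical

/-!
For `u ∈ C*`, every admissible `l` in the infimum defining `M(x/z; C)` satisfies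
`⟪u, x⟫ ≤ l ⟪u, z⟫`, hence `⟪u, x⟫ ≤ M(x/z) ⟪u, z⟫ ≤ M(x/z) / M(b/z)` once
`M(b/z) ⟪u, z⟫ ≤ 1`, and the value `0` is attained at `x = 0`. Otherwise the objective grows
linearly along a ray: along `-t w` if `⟪u, w⟫ < 0` for some `w ∈ C` (there `M ≤ 1`, as
`z + t w ∈ C`), and along `t z` if `M(b/z) ⟪u, z⟫ > 1` (there `M ≤ t + 1`). Finally
`M(b/z) > 0`: the infimum is attained in the closed cone, so `M(b/z) = 0` would put `-b` in the
closure of `C`, against properness.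
-/

open Filter Topology

/-- `coneGauge K x y` is `M(x/y; C)` when `K` is the closure of `C`. -/
noncomputable def coneGauge {E : Type*} [AddCommGroup E] [Module ℝ E] (K : Set E) (x y : E) : ℝ :=
  sInf {l : ℝ | 0 < l ∧ l • y - x ∈ K}

section ConeGauge

variable {E : Type*} [AddCommGroup E] [Module ℝ E] {K : Set E} {x y : E}

theorem coneGauge_nonneg (K : Set E) (x y : E) : 0 ≤ coneGauge K x y :=
  Real.sInf_nonneg fun _ hl => hl.1.le

theorem coneGauge_le {l : ℝ} (hl : 0 < l) (h : l • y - x ∈ K) : coneGauge K x y ≤ l :=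
  csInf_le ⟨0, fun _ hl => hl.1.le⟩ ⟨hl, h⟩

theorem coneGauge_eq_zero_of_forall (h : ∀ l : ℝ, 0 < l → l • y - x ∈ K) :
    coneGauge K x y = 0 :=
  le_antisymm
    (le_of_forall_pos_le_add fun l hl => (coneGauge_le hl (h l hl)).trans_eq (zero_add l).symm)
    (coneGauge_nonneg K x y)

theorem coneGauge_neg_le_one (h : y + x ∈ K) : coneGauge K (-x) y ≤ 1 :=
  coneGauge_le one_pos (by rwa [one_smul, sub_neg_eq_add])

theorem coneGauge_smul_self_le {t : ℝ} (ht : 0 < t + 1) (hy : y ∈ K) :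
    coneGauge K (t • y) y ≤ t + 1 :=
  coneGauge_le ht (by rwa [add_smul, one_smul, add_sub_cancel_left])

variable [TopologicalSpace E] [IsTopologicalAddGroup E] [ContinuousSMul ℝ E]

/-- For closed `K` the infimum is attained, also when it is `0`, which is not admissible. -/
theorem coneGauge_smul_sub_mem (hK : IsClosed K) (hne : ∃ l : ℝ, 0 < l ∧ l • y - x ∈ K) :
    coneGauge K x y • y - x ∈ K := by
  have hinf : coneGauge K x y ∈ closure {l : ℝ | 0 < l ∧ l • y - x ∈ K} :=
    csInf_mem_closure hne ⟨0, fun _ hl => hl.1.le⟩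
  exact hK.closure_subset <| map_mem_closure (f := fun l : ℝ => l • y - x)
    ((continuous_id.smul continuous_const).sub continuous_const) hinf fun _ hl => hl.2

theorem coneGauge_pos (hK : IsClosed K) (hne : ∃ l : ℝ, 0 < l ∧ l • y - x ∈ K) (hx : -x ∉ K) :
    0 < coneGauge K x y := by
  refine (coneGauge_nonneg K x y).lt_of_ne fun h0 => hx ?_
  simpa [← h0] using coneGauge_smul_sub_mem hK hne

end ConeGauge

theorem EReal.iSup_coe_eq_top_of_linear_growth {ι : Type*} {f : ι → ℝ} (γ : ℝ → ι) {a c : ℝ}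
    (ha : 0 < a) (h : ∀ t : ℝ, 0 < t → a * t - c ≤ f (γ t)) : ⨆ i, (f i : EReal) = ⊤ := by
  refine iSup_eq_top.2 fun v hv => ?_
  obtain ⟨r, hvr, -⟩ := EReal.lt_iff_exists_real_btwn.1 hv
  obtain ⟨t, ht, hrt⟩ := exists_pos_lt_mul ha (r + c)
  exact ⟨γ t, hvr.trans (EReal.coe_lt_coe_iff.2 (by linarith [h t ht]))⟩

section InnerDual

variable {E : Type*} [NormedAddCommGroup E] [InnerProductSpace ℝ E] {K : Set E} {u x y b : E}

theorem inner_le_coneGauge_mul_inner (hu : ∀ w ∈ K, 0 ≤ ⟪u, w⟫) (hy : 0 ≤ ⟪u, y⟫)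
    (hne : ∃ l : ℝ, 0 < l ∧ l • y - x ∈ K) :
    ⟪u, x⟫ ≤ coneGauge K x y * ⟪u, y⟫ := by
  have hadm : ∀ l ∈ {l : ℝ | 0 < l ∧ l • y - x ∈ K}, ⟪u, x⟫ ≤ l * ⟪u, y⟫ := fun l hl => by
    have := hu _ hl.2
    rw [inner_sub_right, inner_smul_right] at this
    linarith
  rcases hy.eq_or_lt with hy0 | hypos
  · obtain ⟨l, hl⟩ := hne
    simpa [← hy0] using hadm l hl
  · rw [← div_le_iff₀ hypos]
    exact le_csInf hne fun l hl => (div_le_iff₀ hypos).2 (hadm l hl)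

theorem inner_le_coneGauge_div (hu : ∀ w ∈ K, 0 ≤ ⟪u, w⟫) (hy : 0 ≤ ⟪u, y⟫)
    (hne : ∃ l : ℝ, 0 < l ∧ l • y - x ∈ K) (hb : 0 < coneGauge K b y)
    (hbound : coneGauge K b y * ⟪u, y⟫ ≤ 1) :
    ⟪u, x⟫ ≤ coneGauge K x y / coneGauge K b y :=
  calc ⟪u, x⟫ ≤ coneGauge K x y * ⟪u, y⟫ := inner_le_coneGauge_mul_inner hu hy hne
    _ ≤ coneGauge K x y * (coneGauge K b y)⁻¹ :=
      mul_le_mul_of_nonneg_left (by rwa [← one_div, le_div_iff₀ hb, mul_comm])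
        (coneGauge_nonneg K x y)
    _ = coneGauge K x y / coneGauge K b y := (div_eq_mul_inv _ _).symm

theorem iSup_inner_sub_coneGauge_div_eq_zero (hu : ∀ w ∈ K, 0 ≤ ⟪u, w⟫) (hy : 0 ≤ ⟪u, y⟫)
    (hne : ∀ x, ∃ l : ℝ, 0 < l ∧ l • y - x ∈ K) (hray : ∀ l : ℝ, 0 < l → l • y ∈ K)
    (hb : 0 < coneGauge K b y) (hbound : coneGauge K b y * ⟪u, y⟫ ≤ 1) :
    ⨆ x, ((⟪u, x⟫ - coneGauge K x y / coneGauge K b y : ℝ) : EReal) = 0 := by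
  have h0 : coneGauge K 0 y = 0 := coneGauge_eq_zero_of_forall fun l hl => by
    simpa using hray l hl
  refine le_antisymm (iSup_le fun x => EReal.coe_nonpos.2 (sub_nonpos.2 ?_))
    (le_iSup_of_le 0 (by simp [h0]))
  exact inner_le_coneGauge_div hu hy (hne x) hb hbound

theorem iSup_inner_sub_coneGauge_div_eq_top_of_inner_neg {w : E} (hwu : ⟪u, w⟫ < 0)
    (hw : ∀ t : ℝ, 0 < t → y + t • w ∈ K) (hb : 0 < coneGauge K b y) :
    ⨆ x, ((⟪u, x⟫ - coneGauge K x y / coneGauge K b y : ℝ) : EReal) = ⊤ := by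
  refine EReal.iSup_coe_eq_top_of_linear_growth (fun t => -(t • w))
    (c := (coneGauge K b y)⁻¹) (neg_pos.2 hwu) fun t ht => ?_
  have hM := coneGauge_neg_le_one (hw t ht)
  rw [inner_neg_right, inner_smul_right, div_eq_mul_inv]
  nlinarith [mul_le_mul_of_nonneg_right hM (inv_pos.2 hb).le]

theorem iSup_inner_sub_coneGauge_div_eq_top_of_one_lt (hy : y ∈ K) (hb : 0 < coneGauge K b y)
    (hgap : 1 < coneGauge K b y * ⟪u, y⟫) :
    ⨆ x, ((⟪u, x⟫ - coneGauge K x y / coneGauge K b y : ℝ) : EReal) = ⊤ := by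
  have hgap' : (coneGauge K b y)⁻¹ < ⟪u, y⟫ := by
    rwa [inv_lt_iff_one_lt_mul₀ hb, mul_comm]
  refine EReal.iSup_coe_eq_top_of_linear_growth (fun t => t • y)
    (c := (coneGauge K b y)⁻¹) (sub_pos.2 hgap') fun t ht => ?_
  have hM := coneGauge_smul_self_le (by linarith : 0 < t + 1) hy
  rw [inner_smul_right, div_eq_mul_inv]
  nlinarith [mul_le_mul_of_nonneg_right hM (inv_pos.2 hb).le]

end InnerDual

theorem add_mem_of_convex_of_smul_mem {E : Type*} [AddCommGroup E] [Module ℝ E] {C : Set E}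
    (hconv : Convex ℝ C) (hcone : ∀ c : ℝ, 0 < c → ∀ x ∈ C, c • x ∈ C) {a a' : E}
    (ha : a ∈ C) (ha' : a' ∈ C) : a + a' ∈ C := by
  have hmid := hcone 2 two_pos _ (hconv ha ha' one_half_pos.le one_half_pos.le (add_halves 1))
  rwa [smul_add, smul_smul, smul_smul, mul_one_div_cancel two_ne_zero, one_smul, one_smul]
    at hmid

theorem exists_pos_smul_sub_mem_of_isOpen {E : Type*} [AddCommGroup E] [Module ℝ E]
    [TopologicalSpace E] [IsTopologicalAddGroup E] [ContinuousSMul ℝ E] {C : Set E}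
    (hC : IsOpen C) (hcone : ∀ c : ℝ, 0 < c → ∀ x ∈ C, c • x ∈ C) {z : E} (hz : z ∈ C) (x : E) :
    ∃ l : ℝ, 0 < l ∧ l • z - x ∈ C := by
  have hcont : Tendsto (fun t : ℝ => z - t • x) (𝓝 0) (𝓝 z) := by
    simpa using tendsto_const_nhds.sub
      ((continuous_id.smul continuous_const : Continuous fun t : ℝ => t • x).tendsto 0)
  obtain ⟨t, htC, ht⟩ := ((hcont.eventually_mem (hC.mem_nhds hz)).filter_mono
    nhdsWithin_le_nhds |>.and (self_mem_nhdsWithin (s := Set.Ioi (0 : ℝ)))).exists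
  refine ⟨t⁻¹, inv_pos.2 ht, ?_⟩
  simpa [smul_sub, smul_smul, inv_mul_cancel₀ (ne_of_gt ht)] using hcone _ (inv_pos.2 ht) _ htC

/-- Otherwise `C ∩ -C` would be the open set `{0}`. -/
theorem zero_notMem_of_isOpen {E : Type*} [AddGroup E] [TopologicalSpace E] [ContinuousNeg E]
    [(𝓝[≠] (0 : E)).NeBot] {C : Set E} (hC : IsOpen C) (hpointed : ∀ v ∈ C, -v ∈ C → v = 0) :
    (0 : E) ∉ C := by
  intro h0
  have hline : C ∩ -C = {0} :=
    Set.Subset.antisymm (fun v hv => hpointed v hv.1 hv.2) (by simpa using h0)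
  exact not_isOpen_singleton (0 : E) (hline ▸ hC.inter hC.neg)

theorem conjugate_of_gauge_ratio_general {n : ℕ}
    (C : Set (EuclideanSpace ℝ (Fin (n + 1))))
    (hopen : IsOpen C) (hconv : Convex ℝ C)
    (hcone : ∀ (c : ℝ), 0 < c → ∀ x ∈ C, c • x ∈ C)
    (hproper : ∀ v ∈ closure C, -v ∈ closure C → v = 0)
    (b z : EuclideanSpace ℝ (Fin (n + 1))) (hb : b ∈ C) (hz : z ∈ C)
    (M : EuclideanSpace ℝ (Fin (n + 1)) → EuclideanSpace ℝ (Fin (n + 1)) → ℝ)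
    (hM : ∀ x y, M x y = sInf {l : ℝ | 0 < l ∧ l • y - x ∈ closure C}) :
    ∀ u : EuclideanSpace ℝ (Fin (n + 1)),
      (⨆ x : EuclideanSpace ℝ (Fin (n + 1)),
          ((⟪u, x⟫ - M x z / M b z : ℝ) : EReal))
        = if (∀ w ∈ C, 0 ≤ ⟪u, w⟫) ∧ M b z * ⟪u, z⟫ ≤ 1 then 0 else ⊤ := by
  obtain rfl : M = coneGauge (closure C) := funext₂ hM
  intro u
  have hadm x : ∃ l : ℝ, 0 < l ∧ l • z - x ∈ closure C :=
    (exists_pos_smul_sub_mem_of_isOpen hopen hcone hz x).imp fun _ hl =>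
      ⟨hl.1, subset_closure hl.2⟩
  have hMb : 0 < coneGauge (closure C) b z := coneGauge_pos isClosed_closure (hadm b) fun hnb =>
    zero_notMem_of_isOpen hopen (fun v hv hnv => hproper v (subset_closure hv) (subset_closure hnv))
      (hproper b (subset_closure hb) hnb ▸ hb)
  split_ifs with hu
  · obtain ⟨hdual, hbound⟩ := hu
    have hdual_cl : ∀ w ∈ closure C, 0 ≤ ⟪u, w⟫ := fun w hw => closure_minimal
      (t := {w | 0 ≤ ⟪u, w⟫}) hdual (isClosed_le continuous_const (by fun_prop)) hw
    exact iSup_inner_sub_coneGauge_div_eq_zero hdual_cl (hdual z hz) hadm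
      (fun l hl => subset_closure (hcone l hl z hz)) hMb hbound
  · rcases not_and_or.1 hu with hnotdual | hbig
    · obtain ⟨w, hw, hwu⟩ := not_forall₂.1 hnotdual
      exact iSup_inner_sub_coneGauge_div_eq_top_of_inner_neg (not_le.1 hwu) (fun t ht =>
        subset_closure (add_mem_of_convex_of_smul_mem hconv hcone hz (hcone t ht w hw))) hMb
    · exact iSup_inner_sub_coneGauge_div_eq_top_of_one_lt (subset_closure hz) hMb (not_le.1 hbig)

/-- For an open proper convex cone `C ⊂ ℝ^{n+1}` with
base-point `b ∈ C` and `z ∈ C`, the Legendre–Fenchel conjugate of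
`j_{C,z}(x) := M(x/z;C)/M(b/z;C)` is the characteristic function (0 on the set,
`+∞` off it) of `Z_{C,z} := C* ∩ {u : M(b/z;C)·⟨u,z⟩ ≤ 1}`. -/
theorem conjugate_of_gauge_ratio {n : ℕ}
    (C : Set (EuclideanSpace ℝ (Fin (n + 1))))
    (hopen : IsOpen C) (hconv : Convex ℝ C) (hne : C.Nonempty)
    (hcone : ∀ (c : ℝ), 0 < c → ∀ x ∈ C, c • x ∈ C)
    (hproper : ∀ v ∈ closure C, -v ∈ closure C → v = 0)
    (b z : EuclideanSpace ℝ (Fin (n + 1))) (hb : b ∈ C) (hz : z ∈ C)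
    (M : EuclideanSpace ℝ (Fin (n + 1)) → EuclideanSpace ℝ (Fin (n + 1)) → ℝ)
    (hM : ∀ x y, M x y = sInf {l : ℝ | 0 < l ∧ l • y - x ∈ closure C}) :
    ∀ u : EuclideanSpace ℝ (Fin (n + 1)),
      (⨆ x : EuclideanSpace ℝ (Fin (n + 1)),
          ((⟪u, x⟫ - M x z / M b z : ℝ) : EReal))
        = if (∀ w ∈ C, 0 ≤ ⟪u, w⟫) ∧ M b z * ⟪u, z⟫ ≤ 1 then 0 else ⊤ :=
  conjugate_of_gauge_ratio_general C hopen hconv hcone hproper b z hb hz M hM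
end

section
/- A bijection g between two open proper convex cones is gauge-preserving (M(g(x)/g(y);C') = M(x/y;C) for all x,y) if and only if g is order-preserving, homogeneous of degree 1, and g^{-1} is order-preserving. -/
/-!
For `y ∈ C` and `l > 0` we have `x ≤_C l • y ↔ M(x/y; C) ≤ l`: the set defining the gauge is
nonempty because `C` is open, its infimum still satisfies the closed relation, and the relation is
monotone in `l`. Since nonnegative reals are equal iff they have the same positive upper bounds,
`g` preserves gauges iff `x ≤_C l • y ↔ g x ≤_{C'} l • g y` for all `l > 0`. With `l = 1` this is
order preservation both ways; comparing `c • x` with `x` at the scales `c` and `c⁻¹` gives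
`c • g x ≤ g (c • x) ≤ c • g x`, so properness of `C'` forces homogeneity; and order preservation
plus homogeneity gives back the scaled relations.
-/

open Set Filter Topology

def Convex.toConvexCone {E : Type*} [AddCommGroup E] [Module ℝ E] {C : Set E}
    (hconv : Convex ℝ C) (hcone : ∀ c : ℝ, 0 < c → ∀ x ∈ C, c • x ∈ C) : ConvexCone ℝ E where
  carrier := C
  smul_mem' c hc x hx := hcone c hc x hx
  add_mem' x hx y hy := by
    have hmid := hconv hx hy (by norm_num : (0 : ℝ) ≤ 1 / 2) (by norm_num : (0 : ℝ) ≤ 1 / 2)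
      (by norm_num)
    convert hcone 2 two_pos _ hmid using 1
    module

lemma eq_of_forall_pos_le_iff {a b : ℝ} (ha : 0 ≤ a) (hb : 0 ≤ b)
    (h : ∀ l, 0 < l → (a ≤ l ↔ b ≤ l)) : a = b :=
  le_antisymm (le_of_forall_gt_imp_ge_of_dense fun l hl => (h l (hb.trans_lt hl)).mpr hl.le)
    (le_of_forall_gt_imp_ge_of_dense fun l hl => (h l (ha.trans_lt hl)).mp hl.le)

namespace ConvexCone

section TopologicalVectorSpace

variable {E : Type*} [AddCommGroup E] [Module ℝ E] [TopologicalSpace E] (K : ConvexCone ℝ E)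

/-- The gauge `M(x/y; K) = inf {l > 0 | x ≤_K l • y}` of the order defined by `closure K`. -/
noncomputable def orderGauge (x y : E) : ℝ :=
  sInf {l : ℝ | 0 < l ∧ l • y - x ∈ closure (K : Set E)}

lemma orderGauge_nonneg (x y : E) : 0 ≤ K.orderGauge x y :=
  Real.sInf_nonneg fun _ hl => hl.1.le

variable {K} [ContinuousSMul ℝ E]

lemma smul_mem_closure_of_nonneg {y : E} (hy : y ∈ K) {c : ℝ} (hc : 0 ≤ c) :
    c • y ∈ closure (K : Set E) := by
  have hclosed : IsClosed {c : ℝ | c • y ∈ closure (K : Set E)} :=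
    isClosed_closure.preimage (continuous_id.smul continuous_const)
  have hIoi : Ioi (0 : ℝ) ⊆ {c : ℝ | c • y ∈ closure (K : Set E)} :=
    fun c hc => subset_closure (K.smul_mem hc hy)
  exact closure_minimal hIoi hclosed (by rwa [closure_Ioi])

variable [IsTopologicalAddGroup E]

lemma exists_smul_sub_mem_of_isOpen (hK : IsOpen (K : Set E)) {y : E} (hy : y ∈ K) (x : E) :
    ∃ l : ℝ, 0 < l ∧ l • y - x ∈ K := by
  have hcont : Tendsto (fun t : ℝ => y - t • x) (𝓝[>] 0) (𝓝 y) := by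
    have : Continuous fun t : ℝ => y - t • x := by fun_prop
    simpa using this.continuousWithinAt.tendsto (x := 0) (s := Ioi 0)
  obtain ⟨t, ht, htK⟩ :=
    ((hcont.eventually (hK.mem_nhds hy)).and self_mem_nhdsWithin).exists.imp fun _ h => h.symm
  refine ⟨t⁻¹, inv_pos.mpr ht, ?_⟩
  convert K.smul_mem (inv_pos.mpr ht) htK using 1
  rw [smul_sub, smul_smul, inv_mul_cancel₀ ht.ne', one_smul]

lemma smul_sub_mem_closure_iff_orderGauge_le (hK : IsOpen (K : Set E)) {x y : E} (hy : y ∈ K)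
    {l : ℝ} (hl : 0 < l) : l • y - x ∈ closure (K : Set E) ↔ K.orderGauge x y ≤ l := by
  set S := {l : ℝ | 0 < l ∧ l • y - x ∈ closure (K : Set E)}
  have hbdd : BddBelow S := ⟨0, fun _ hl => hl.1.le⟩
  refine ⟨fun h => csInf_le hbdd ⟨hl, h⟩, fun h => ?_⟩
  have hne : S.Nonempty := by
    obtain ⟨l, hl, hlK⟩ := exists_smul_sub_mem_of_isOpen hK hy x
    exact ⟨l, hl, subset_closure hlK⟩
  have hclosed : IsClosed {l : ℝ | l • y - x ∈ closure (K : Set E)} :=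
    isClosed_closure.preimage ((continuous_id.smul continuous_const).sub continuous_const)
  have hinf : K.orderGauge x y • y - x ∈ closure (K : Set E) :=
    closure_minimal (fun _ hl => hl.2) hclosed (csInf_mem_closure hne hbdd)
  have hsplit : l • y - x = (K.orderGauge x y • y - x) + (l - K.orderGauge x y) • y := by module
  rw [hsplit]
  exact K.closure.add_mem hinf (smul_mem_closure_of_nonneg hy (sub_nonneg.mpr h))

end TopologicalVectorSpace

section Maps

variable {E F : Type*} [AddCommGroup E] [Module ℝ E] [TopologicalSpace E] [ContinuousSMul ℝ E]
  [AddCommGroup F] [Module ℝ F] [TopologicalSpace F]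
  [IsTopologicalAddGroup F] [ContinuousSMul ℝ F]
  {K : ConvexCone ℝ E} {K' : ConvexCone ℝ F} {g : E → F}

lemma forall_smul_sub_mem_closure_iff
    (hproper' : ∀ v ∈ closure (K' : Set F), -v ∈ closure (K' : Set F) → v = 0) :
    (∀ x ∈ K, ∀ y ∈ K, ∀ l : ℝ, 0 < l →
        (l • g y - g x ∈ closure (K' : Set F) ↔ l • y - x ∈ closure (K : Set E))) ↔
      ((∀ x ∈ K, ∀ y ∈ K, y - x ∈ closure (K : Set E) → g y - g x ∈ closure (K' : Set F)) ∧
        (∀ c : ℝ, 0 < c → ∀ x ∈ K, g (c • x) = c • g x) ∧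
        (∀ x ∈ K, ∀ y ∈ K, g y - g x ∈ closure (K' : Set F) → y - x ∈ closure (K : Set E))) := by
  constructor
  · intro h
    refine ⟨fun x hx y hy hxy => ?_, fun c hc x hx => ?_, fun x hx y hy hxy => ?_⟩
    · simpa using (h x hx y hy 1 one_pos).mpr (by simpa using hxy)
    · have h0 : (0 : E) ∈ closure (K : Set E) := by
        simpa using smul_mem_closure_of_nonneg hx le_rfl
      have hcx := K.smul_mem hc hx
      have hle : c • g x - g (c • x) ∈ closure (K' : Set F) :=
        (h _ hcx x hx c hc).mpr (by simpa using h0)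
      have hge : c⁻¹ • g (c • x) - g x ∈ closure (K' : Set F) :=
        (h x hx _ hcx c⁻¹ (inv_pos.mpr hc)).mpr (by simpa [smul_smul, hc.ne'] using h0)
      have hge' : g (c • x) - c • g x ∈ closure (K' : Set F) := by
        have := K'.closure.smul_mem hc hge
        rwa [smul_sub, smul_smul, mul_inv_cancel₀ hc.ne', one_smul] at this
      exact sub_eq_zero.mp (hproper' _ hge' (by rwa [neg_sub]))
    · simpa using (h x hx y hy 1 one_pos).mp (by simpa using hxy)
  · rintro ⟨hmono, hhom, hmono'⟩ x hx y hy l hl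
    rw [← hhom l hl y hy]
    exact ⟨hmono' x hx _ (K.smul_mem hl hy), hmono x hx _ (K.smul_mem hl hy)⟩

variable [IsTopologicalAddGroup E]

lemma orderGauge_comp_eq_iff (hK : IsOpen (K : Set E)) (hK' : IsOpen (K' : Set F))
    (hg : MapsTo g K K') :
    (∀ x ∈ K, ∀ y ∈ K, K'.orderGauge (g x) (g y) = K.orderGauge x y) ↔
      ∀ x ∈ K, ∀ y ∈ K, ∀ l : ℝ, 0 < l →
        (l • g y - g x ∈ closure (K' : Set F) ↔ l • y - x ∈ closure (K : Set E)) := by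
  refine forall₂_congr fun x hx => forall₂_congr fun y hy => ?_
  have hiff : ∀ l : ℝ, 0 < l →
      ((l • g y - g x ∈ closure (K' : Set F) ↔ l • y - x ∈ closure (K : Set E)) ↔
        (K'.orderGauge (g x) (g y) ≤ l ↔ K.orderGauge x y ≤ l)) := fun l hl => by
    rw [smul_sub_mem_closure_iff_orderGauge_le hK hy hl,
      smul_sub_mem_closure_iff_orderGauge_le hK' (hg hy) hl]
  refine ⟨fun h l hl => (hiff l hl).mpr (h ▸ Iff.rfl), fun h => ?_⟩
  exact eq_of_forall_pos_le_iff (orderGauge_nonneg _ _ _) (orderGauge_nonneg _ _ _)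
    fun l hl => (hiff l hl).mp (h l hl)

end Maps

end ConvexCone

theorem gaugePreserving_iff_general
    {V V' : Type*}
    [NormedAddCommGroup V] [NormedSpace ℝ V]
    [NormedAddCommGroup V'] [NormedSpace ℝ V']
    (C : Set V) (C' : Set V')
    (hopen : IsOpen C) (hconv : Convex ℝ C)
    (hcone : ∀ (c : ℝ), 0 < c → ∀ x ∈ C, c • x ∈ C)
    (hopen' : IsOpen C') (hconv' : Convex ℝ C')
    (hcone' : ∀ (c : ℝ), 0 < c → ∀ x ∈ C', c • x ∈ C')
    (hproper' : ∀ v ∈ closure C', -v ∈ closure C' → v = 0)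
    (M : V → V → ℝ) (hM : ∀ x y, M x y = sInf {l : ℝ | 0 < l ∧ l • y - x ∈ closure C})
    (M' : V' → V' → ℝ)
    (hM' : ∀ x y, M' x y = sInf {l : ℝ | 0 < l ∧ l • y - x ∈ closure C'})
    (g : V → V') (hg : Set.BijOn g C C') :
    (∀ x ∈ C, ∀ y ∈ C, M' (g x) (g y) = M x y) ↔
    ((∀ x ∈ C, ∀ y ∈ C, y - x ∈ closure C → g y - g x ∈ closure C') ∧
     (∀ (c : ℝ), 0 < c → ∀ x ∈ C, g (c • x) = c • g x) ∧
     (∀ x ∈ C, ∀ y ∈ C, g y - g x ∈ closure C' → y - x ∈ closure C)) := by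
  let K := hconv.toConvexCone hcone
  let K' := hconv'.toConvexCone hcone'
  obtain rfl : M = K.orderGauge := funext fun x => funext (hM x)
  obtain rfl : M' = K'.orderGauge := funext fun x => funext (hM' x)
  exact (ConvexCone.orderGauge_comp_eq_iff (K := K) (K' := K') hopen hopen' hg.mapsTo).trans
    (ConvexCone.forall_smul_sub_mem_closure_iff (K := K) (K' := K') hproper')

/-- A bijection `g` between two open proper convex cones is
gauge-preserving (`M(g(x)/g(y);C') = M(x/y;C)` for all `x, y ∈ C`) if and only
if `g` is order-preserving, homogeneous of degree `1`, and `g⁻¹` is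
order-preserving.  Here `x ≤_C y` means `y − x ∈ closure C`, and
`M(x/y;C) := inf{λ > 0 : λ•y − x ∈ closure C}`. -/
theorem gaugePreserving_iff
    {V V' : Type*}
    [NormedAddCommGroup V] [NormedSpace ℝ V] [FiniteDimensional ℝ V]
    [NormedAddCommGroup V'] [NormedSpace ℝ V'] [FiniteDimensional ℝ V']
    (C : Set V) (C' : Set V')
    (hopen : IsOpen C) (hconv : Convex ℝ C) (hne : C.Nonempty)
    (hcone : ∀ (c : ℝ), 0 < c → ∀ x ∈ C, c • x ∈ C)
    (hproper : ∀ v ∈ closure C, -v ∈ closure C → v = 0)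
    (hopen' : IsOpen C') (hconv' : Convex ℝ C') (hne' : C'.Nonempty)
    (hcone' : ∀ (c : ℝ), 0 < c → ∀ x ∈ C', c • x ∈ C')
    (hproper' : ∀ v ∈ closure C', -v ∈ closure C' → v = 0)
    (M : V → V → ℝ) (hM : ∀ x y, M x y = sInf {l : ℝ | 0 < l ∧ l • y - x ∈ closure C})
    (M' : V' → V' → ℝ)
    (hM' : ∀ x y, M' x y = sInf {l : ℝ | 0 < l ∧ l • y - x ∈ closure C'})
    (g : V → V') (hg : Set.BijOn g C C') :
    (∀ x ∈ C, ∀ y ∈ C, M' (g x) (g y) = M x y) ↔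
    ((∀ x ∈ C, ∀ y ∈ C, y - x ∈ closure C → g y - g x ∈ closure C') ∧
     (∀ (c : ℝ), 0 < c → ∀ x ∈ C, g (c • x) = c • g x) ∧
     (∀ x ∈ C, ∀ y ∈ C, g y - g x ∈ closure C' → y - x ∈ closure C)) :=
  gaugePreserving_iff_general C C' hopen hconv hcone hopen' hconv' hcone' hproper' M hM M' hM' g hg
end
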